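/- arXiv:math/0606391 — 5 statements merged into one kernel-verified Lean document; each statement's English description precedes it below -/
import Mathlib

section
/- For elements a, b, c and variables x_1,...,x_m, y_1,...,y_m in a field such that all denominators are nonzero, the determinant of the m×m matrix with (i,j) entry 1/(a + b(x_i + y_j) + c x_i y_j) equals (b² − ac)^{m(m−1)/2} · Π_{1≤i<j≤m}(x_j − x_i)(y_j − y_i) / Π_{i,j=1}^m (a + b(x_i + y_j) + c x_i y_j). -/
open Finset

lemma gc_prod_pairs {M : Type*} [CommMonoid M] (n : ℕ) (f : Fin n → Fin n → M) :
    ∏ p ∈ univ.filter (fun p : Fin n × Fin n => p.1 < p.2), f p.1 p.2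
      = ∏ j : Fin n, ∏ i ∈ Finset.Iio j, f i j := by
  refine Finset.prod_finset_product_right' _ univ (fun j => Finset.Iio j) ?_
  intro p; simp

lemma gc_pairs_succ {M : Type*} [CommMonoid M] (n : ℕ) (f : Fin (n+1) → Fin (n+1) → M) :
    (∏ j : Fin (n+1), ∏ i ∈ Finset.Iio j, f i j)
      = (∏ j : Fin n, ∏ i ∈ Finset.Iio j, f i.castSucc j.castSucc)
        * ∏ i : Fin n, f i.castSucc (Fin.last n) := by
  rw [Fin.prod_univ_castSucc]
  congr 1
  · exact Finset.prod_congr rfl fun j _ => by rw [Fin.Iio_castSucc, Finset.prod_map]; rfl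
  · rw [Fin.Iio_last_eq_map, Finset.prod_map]; rfl

lemma gc_prod_pairs_mul {M : Type*} [CommMonoid M] :
    ∀ (n : ℕ) (g : Fin n → M),
      (∏ j : Fin n, ∏ i ∈ Finset.Iio j, g i * g j) = ∏ i : Fin n, g i ^ (n - 1) := by
  intro n
  induction n with
  | zero => intro g; simp
  | succ n ih =>
    intro g
    rw [gc_pairs_succ, ih, Fin.prod_univ_castSucc (f := fun i => g i ^ (n+1-1)),
      Finset.prod_mul_distrib, Finset.prod_const, Finset.card_univ, Fintype.card_fin]
    rcases n with _ | k
    · simp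
    · simp only [Nat.add_sub_cancel]
      rw [← mul_assoc, ← Finset.prod_mul_distrib]
      congr 1
      exact Finset.prod_congr rfl fun i _ => (pow_succ _ _).symm

lemma gc_prod_pairs_const {M : Type*} [CommMonoid M] (n : ℕ) (k : M) :
    (∏ j : Fin n, ∏ i ∈ Finset.Iio j, k) = k ^ (n * (n - 1) / 2) := by
  have : ∀ j : Fin n, (∏ i ∈ Finset.Iio j, k) = k ^ (j : ℕ) := by
    intro j; rw [Finset.prod_const, Fin.card_Iio]
  rw [Finset.prod_congr rfl (fun j _ => this j), Finset.prod_pow_eq_pow_sum,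
    Fin.sum_univ_eq_sum_range (fun i => i), Finset.sum_range_id]

lemma gc_key {F : Type*} [Field F] {s t : F} (hs : s ≠ 0) (ht : t ≠ 0) :
    s⁻¹ - t⁻¹ = t⁻¹ * ((t - s) * s⁻¹) := by
  rw [inv_sub_inv hs ht, div_eq_mul_inv, mul_inv]; ring

lemma gc_cauchy {F : Type*} [Field F] :
    ∀ (n : ℕ) (u v : Fin n → F), (∀ i j, u i + v j ≠ 0) →
    Matrix.det (Matrix.of fun i j : Fin n => (u i + v j)⁻¹) =
      (∏ j : Fin n, ∏ i ∈ Finset.Iio j, ((u j - u i) * (v j - v i))) /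
        ∏ i : Fin n, ∏ j : Fin n, (u i + v j) := by
  intro n
  induction n with
  | zero => intro u v h; simp
  | succ n ih =>
    intro u v h
    set L : Fin (n+1) := Fin.last n with hL
    set A : Matrix (Fin (n+1)) (Fin (n+1)) F := Matrix.of fun i j => (u i + v j)⁻¹ with hA
    set A1 : Matrix (Fin (n+1)) (Fin (n+1)) F := Matrix.of fun i j =>
      if j = L then (u i + v L)⁻¹ else (u i + v j)⁻¹ - (u i + v L)⁻¹ with hA1
    set B : Matrix (Fin (n+1)) (Fin (n+1)) F := Matrix.of fun i j =>
      if j = L then 1 else (u i + v j)⁻¹ with hB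
    set B1 : Matrix (Fin (n+1)) (Fin (n+1)) F := Matrix.of fun i j =>
      if i = L then B L j else B i j - B L j with hB1
    set B2 : Matrix (Fin (n+1)) (Fin (n+1)) F := Matrix.of fun i j =>
      if j = L then (if i = L then (1:F) else 0) else if i = L then 1 else (u i + v j)⁻¹ with hB2
    -- column operations
    have step1 : A1.det = A.det := by
      rw [← Matrix.det_transpose A, ← Matrix.det_transpose A1]
      refine Matrix.det_eq_of_forall_row_eq_smul_add_const
        (fun j => if j = L then 0 else (-1:F)) L (if_pos rfl) ?_
      intro j i
      by_cases hj : j = L <;>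
        simp [hA, hA1, hj, Matrix.transpose_apply, sub_eq_add_neg]
    -- factor rows/columns out of A1
    have fact1 : A1 = Matrix.of fun i j => (u i + v L)⁻¹ *
        ((Matrix.of fun i j => (if j = L then 1 else v L - v j) * B i j) i j) := by
      ext i j
      by_cases hj : j = L
      · simp [hA1, hB, hj]
      · have h1 := h i j
        have h2 := h i L
        simp only [hA1, hB, Matrix.of_apply, if_neg hj]
        rw [gc_key h1 h2]
        ring_nf
    have step2 : A1.det = (∏ i, (u i + v L)⁻¹) *
        ((∏ j, (if j = L then 1 else v L - v j)) * B.det) := by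
      rw [fact1, Matrix.det_mul_column, Matrix.det_mul_row]
    -- row operations on B
    have step3 : B1.det = B.det := by
      refine Matrix.det_eq_of_forall_row_eq_smul_add_const
        (fun i => if i = L then 0 else (-1:F)) L (if_pos rfl) ?_
      intro i j
      by_cases hi : i = L <;> simp [hB1, hi, sub_eq_add_neg]
    have fact2 : B1 = Matrix.of fun i j => (if i = L then 1 else u L - u i) *
        ((Matrix.of fun i j => (if j = L then 1 else (u L + v j)⁻¹) * B2 i j) i j) := by
      ext i j
      by_cases hi : i = L <;> by_cases hj : j = L
      · simp [hB1, hB, hB2, hi, hj]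
      · simp [hB1, hB, hB2, hi, hj]
      · simp [hB1, hB, hB2, hi, hj]
      · have h1 := h i j
        have h2 := h L j
        simp only [hB1, hB, hB2, Matrix.of_apply, if_neg hi, if_neg hj]
        rw [gc_key h1 h2]
        ring_nf
    have step4 : B1.det = (∏ i, (if i = L then 1 else u L - u i)) *
        ((∏ j, (if j = L then 1 else (u L + v j)⁻¹)) * B2.det) := by
      rw [fact2, Matrix.det_mul_column, Matrix.det_mul_row]
    -- expand B2 along last column
    have step5 : B2.det =
        Matrix.det (Matrix.of fun i j : Fin n => (u i.castSucc + v j.castSucc)⁻¹) := by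
      rw [Matrix.det_succ_column B2 L]
      rw [Finset.sum_eq_single L]
      · have hBL : B2 L L = 1 := by simp [hB2]
        have hsub : B2.submatrix L.succAbove L.succAbove =
            Matrix.of fun i j : Fin n => (u i.castSucc + v j.castSucc)⁻¹ := by
          ext i j
          simp [hB2, hL, Fin.succAbove_last, (Fin.castSucc_lt_last i).ne,
            (Fin.castSucc_lt_last j).ne]
        rw [hBL, hsub]
        have : ((-1 : F) ^ ((L : ℕ) + (L : ℕ))) = 1 := by
          refine Even.neg_one_pow ⟨(L : ℕ), rfl⟩
        rw [this]; ring
      · intro b _ hb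
        have : B2 b L = 0 := by simp [hB2, hb]
        rw [this]; ring
      · simp
    -- induction hypothesis
    have ihval := ih (fun i => u i.castSucc) (fun j => v j.castSucc) (fun i j => h _ _)
    set Num := ∏ j : Fin n, ∏ i ∈ Finset.Iio j,
      ((u j.castSucc - u i.castSucc) * (v j.castSucc - v i.castSucc)) with hNum
    set Den := ∏ i : Fin n, ∏ j : Fin n, (u i.castSucc + v j.castSucc) with hDen
    set Qu := ∏ i : Fin n, (u L - u i.castSucc) with hQu
    set Qv := ∏ j : Fin n, (v L - v j.castSucc) with hQv
    set Pu := ∏ i : Fin (n+1), (u i + v L) with hPu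
    set Pv := ∏ j : Fin n, (u L + v j.castSucc) with hPv
    have hPu0 : Pu ≠ 0 := Finset.prod_ne_zero_iff.mpr fun i _ => h i L
    have hPv0 : Pv ≠ 0 := Finset.prod_ne_zero_iff.mpr fun j _ => h L _
    have hDen0 : Den ≠ 0 := Finset.prod_ne_zero_iff.mpr fun i _ =>
      Finset.prod_ne_zero_iff.mpr fun j _ => h _ _
    -- simplify the ite products
    have hcol : (∏ j : Fin (n+1), (if j = L then 1 else v L - v j)) = Qv := by
      rw [Fin.prod_univ_castSucc]
      rw [if_pos hL.symm, mul_one]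
      exact Finset.prod_congr rfl fun j _ => if_neg (by rw [hL]; exact (Fin.castSucc_lt_last j).ne)
    have hrow : (∏ i : Fin (n+1), (if i = L then 1 else u L - u i)) = Qu := by
      rw [Fin.prod_univ_castSucc]
      rw [if_pos hL.symm, mul_one]
      exact Finset.prod_congr rfl fun j _ => if_neg (by rw [hL]; exact (Fin.castSucc_lt_last j).ne)
    have hc2 : (∏ j : Fin (n+1), (if j = L then 1 else (u L + v j)⁻¹)) = Pv⁻¹ := by
      rw [Fin.prod_univ_castSucc]
      rw [if_pos hL.symm, mul_one, hPv, ← Finset.prod_inv_distrib]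
      exact Finset.prod_congr rfl fun j _ => if_neg (by rw [hL]; exact (Fin.castSucc_lt_last j).ne)
    have hrinv : (∏ i : Fin (n+1), (u i + v L)⁻¹) = Pu⁻¹ := by
      rw [hPu, ← Finset.prod_inv_distrib]
    -- numerator and denominator of the target
    have hNum' : (∏ j : Fin (n+1), ∏ i ∈ Finset.Iio j, ((u j - u i) * (v j - v i)))
        = Num * (Qu * Qv) := by
      rw [gc_pairs_succ n (fun i j => (u j - u i) * (v j - v i)), Finset.prod_mul_distrib]
    have hDen' : (∏ i : Fin (n+1), ∏ j : Fin (n+1), (u i + v j)) = Den * Pu * Pv := by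
      rw [Fin.prod_univ_castSucc (f := fun i => ∏ j : Fin (n+1), (u i + v j))]
      have e1 : ∀ i : Fin n, (∏ j : Fin (n+1), (u i.castSucc + v j))
          = (∏ j : Fin n, (u i.castSucc + v j.castSucc)) * (u i.castSucc + v L) :=
        fun i => Fin.prod_univ_castSucc _
      rw [Finset.prod_congr rfl (fun i _ => e1 i), Finset.prod_mul_distrib,
        Fin.prod_univ_castSucc (f := fun j => u L + v j)]
      have e2 : Pu = (∏ i : Fin n, (u i.castSucc + v L)) * (u (Fin.last n) + v L) :=
        Fin.prod_univ_castSucc _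
      rw [hDen, hPv, e2, hL]
      ring
    calc A.det = A1.det := step1.symm
      _ = (∏ i, (u i + v L)⁻¹) * ((∏ j, (if j = L then 1 else v L - v j)) * B.det) := step2
      _ = Pu⁻¹ * (Qv * B1.det) := by rw [hrinv, hcol, step3]
      _ = Pu⁻¹ * (Qv * (Qu * (Pv⁻¹ * (Num / Den)))) := by
          rw [step4, hrow, hc2, step5, ihval]
      _ = (Num * (Qu * Qv)) / (Den * Pu * Pv) := by
          rw [div_eq_mul_inv, div_eq_mul_inv, mul_inv, mul_inv]
          ring
      _ = _ := by rw [hNum', hDen']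

lemma gc_main_aux {F : Type*} [Field F] (m : ℕ) (a b c : F) (x y : Fin m → F)
    (h : ∀ i j, a + b * (x i + y j) + c * x i * y j ≠ 0)
    (hb : ∀ i, b + c * x i ≠ 0) :
    Matrix.det (Matrix.of fun i j : Fin m => (a + b * (x i + y j) + c * x i * y j)⁻¹) =
      (b ^ 2 - a * c) ^ (m * (m - 1) / 2) *
        (∏ p ∈ Finset.univ.filter (fun p : Fin m × Fin m => p.1 < p.2),
          (x p.2 - x p.1) * (y p.2 - y p.1)) /
        ∏ i : Fin m, ∏ j : Fin m, (a + b * (x i + y j) + c * x i * y j) := by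
  set u : Fin m → F := fun i => (a + b * x i) * (b + c * x i)⁻¹ with hu
  have key1 : ∀ i j, (b + c * x i) * (u i + y j)
      = a + b * (x i + y j) + c * x i * y j := by
    intro i j
    have e1 : (b + c * x i) * ((a + b * x i) * (b + c * x i)⁻¹) = a + b * x i := by
      rw [mul_comm (a + b * x i), ← mul_assoc, mul_inv_cancel₀ (hb i), one_mul]
    rw [hu, mul_add, e1]
    ring
  have huv : ∀ i j, u i + y j ≠ 0 := by
    intro i j hz
    exact h i j (by rw [← key1, hz, mul_zero])
  have key2 : ∀ i j : Fin m, u j - u i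
      = (b ^ 2 - a * c) * (((b + c * x i)⁻¹ * (b + c * x j)⁻¹) * (x j - x i)) := by
    intro i j
    rw [hu]
    simp only
    rw [← div_eq_mul_inv, ← div_eq_mul_inv, div_sub_div _ _ (hb j) (hb i),
      div_eq_mul_inv, mul_inv]
    ring
  have hM : (Matrix.of fun i j : Fin m => (a + b * (x i + y j) + c * x i * y j)⁻¹)
      = Matrix.of fun i j => (b + c * x i)⁻¹
          * ((Matrix.of fun i j : Fin m => (u i + y j)⁻¹) i j) := by
    ext i j
    rw [Matrix.of_apply, Matrix.of_apply, Matrix.of_apply, ← key1, mul_inv]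
  set Pb := ∏ i : Fin m, (b + c * x i) with hPb
  set PD := ∏ i : Fin m, ∏ j : Fin m, (a + b * (x i + y j) + c * x i * y j) with hPD
  set V := ∏ p ∈ Finset.univ.filter (fun p : Fin m × Fin m => p.1 < p.2),
      (x p.2 - x p.1) * (y p.2 - y p.1) with hV
  set E := (b ^ 2 - a * c) ^ (m * (m - 1) / 2) with hE
  have hPb0 : Pb ≠ 0 := Finset.prod_ne_zero_iff.mpr fun i _ => hb i
  have hPD0 : PD ≠ 0 := Finset.prod_ne_zero_iff.mpr fun i _ =>
    Finset.prod_ne_zero_iff.mpr fun j _ => h i j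
  have hinvPb : (∏ i : Fin m, (b + c * x i)⁻¹) = Pb⁻¹ := by
    rw [hPb, ← Finset.prod_inv_distrib]
  have hNu : (∏ j : Fin m, ∏ i ∈ Finset.Iio j, ((u j - u i) * (y j - y i)))
      = E * (Pb⁻¹ ^ (m - 1) * V) := by
    have split : (∏ j : Fin m, ∏ i ∈ Finset.Iio j, ((u j - u i) * (y j - y i)))
        = (∏ j : Fin m, ∏ i ∈ Finset.Iio j, (b ^ 2 - a * c))
          * ((∏ j : Fin m, ∏ i ∈ Finset.Iio j, ((b + c * x i)⁻¹ * (b + c * x j)⁻¹))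
            * (∏ j : Fin m, ∏ i ∈ Finset.Iio j, ((x j - x i) * (y j - y i)))) := by
      rw [← Finset.prod_mul_distrib, ← Finset.prod_mul_distrib]
      refine Finset.prod_congr rfl fun j _ => ?_
      rw [← Finset.prod_mul_distrib, ← Finset.prod_mul_distrib]
      refine Finset.prod_congr rfl fun i _ => ?_
      rw [key2 i j]
      ring
    rw [split, gc_prod_pairs_const m (b ^ 2 - a * c),
      gc_prod_pairs_mul m (fun i => (b + c * x i)⁻¹), ← gc_prod_pairs m
        (fun i j => (x j - x i) * (y j - y i)), Finset.prod_pow, hinvPb, hV, hE]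
  have hDe : (∏ i : Fin m, ∏ j : Fin m, (u i + y j)) = Pb⁻¹ ^ m * PD := by
    have inner : ∀ i, (∏ j : Fin m, (u i + y j))
        = (b + c * x i)⁻¹ ^ m * ∏ j : Fin m, (a + b * (x i + y j) + c * x i * y j) := by
      intro i
      have e : ∀ j, u i + y j = (b + c * x i)⁻¹ * (a + b * (x i + y j) + c * x i * y j) :=
        fun j => by rw [← key1 i j, inv_mul_cancel_left₀ (hb i)]
      rw [Finset.prod_congr rfl fun j _ => e j, Finset.prod_mul_distrib,
        Finset.prod_const, Finset.card_univ, Fintype.card_fin]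
    rw [Finset.prod_congr rfl fun i _ => inner i, Finset.prod_mul_distrib,
      Finset.prod_pow, hinvPb, hPD]
  rw [hM, Matrix.det_mul_column, gc_cauchy m u y huv, hNu, hDe, hinvPb]
  have hX : Pb⁻¹ ≠ 0 := inv_ne_zero hPb0
  rw [← mul_div_assoc,
    div_eq_div_iff (mul_ne_zero (pow_ne_zero _ hX) hPD0) hPD0]
  rcases m with _ | k
  · have hPb1 : Pb = 1 := by rw [hPb]; simp
    rw [hPb1]
    norm_num
  · have hm1 : k + 1 - 1 = k := rfl
    rw [hm1]
    ring

abbrev gcR (m : ℕ) : Type := MvPolynomial ((Fin 3) ⊕ (Fin m ⊕ Fin m)) ℤ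
noncomputable abbrev gcA (m : ℕ) : gcR m := MvPolynomial.X (Sum.inl 0)
noncomputable abbrev gcB (m : ℕ) : gcR m := MvPolynomial.X (Sum.inl 1)
noncomputable abbrev gcC (m : ℕ) : gcR m := MvPolynomial.X (Sum.inl 2)
noncomputable abbrev gcX (m : ℕ) (i : Fin m) : gcR m := MvPolynomial.X (Sum.inr (Sum.inl i))
noncomputable abbrev gcY (m : ℕ) (j : Fin m) : gcR m := MvPolynomial.X (Sum.inr (Sum.inr j))
noncomputable abbrev gcD (m : ℕ) (i j : Fin m) : gcR m :=
  gcA m + gcB m * (gcX m i + gcY m j) + gcC m * gcX m i * gcY m j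

lemma gcD_ne_zero (m : ℕ) (i j : Fin m) : gcD m i j ≠ 0 := by
  intro hp
  have := congrArg (MvPolynomial.eval
    (fun v : (Fin 3) ⊕ (Fin m ⊕ Fin m) => if v = Sum.inl 0 then (1:ℤ) else 0)) hp
  simp [gcD, gcA, gcB, gcC, gcX, gcY] at this

lemma gcB_ne_zero (m : ℕ) (i : Fin m) : gcB m + gcC m * gcX m i ≠ 0 := by
  intro hp
  have := congrArg (MvPolynomial.eval
    (fun v : (Fin 3) ⊕ (Fin m ⊕ Fin m) => if v = Sum.inl 1 then (1:ℤ) else 0)) hp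
  simp [gcB, gcC, gcX] at this

lemma gc_poly (m : ℕ) :
    Matrix.det (Matrix.of fun i j : Fin m => ∏ l ∈ Finset.univ.erase j, gcD m i l)
      = (gcB m ^ 2 - gcA m * gcC m) ^ (m * (m - 1) / 2) *
        ∏ p ∈ Finset.univ.filter (fun p : Fin m × Fin m => p.1 < p.2),
          (gcX m p.2 - gcX m p.1) * (gcY m p.2 - gcY m p.1) := by
  set K := FractionRing (gcR m) with hK
  set φ : gcR m →+* K := algebraMap (gcR m) K with hφdef
  have hφ : Function.Injective φ := IsFractionRing.injective (gcR m) K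
  have hφ0 : ∀ p : gcR m, p ≠ 0 → φ p ≠ 0 :=
    fun p hp hz => hp (hφ (by rwa [map_zero]))
  have hDmap : ∀ i j, φ (gcA m) + φ (gcB m) * (φ (gcX m i) + φ (gcY m j))
      + φ (gcC m) * φ (gcX m i) * φ (gcY m j) = φ (gcD m i j) := by
    intro i j; simp [gcD, map_add, map_mul]
  have hDK : ∀ i j, φ (gcA m) + φ (gcB m) * (φ (gcX m i) + φ (gcY m j))
      + φ (gcC m) * φ (gcX m i) * φ (gcY m j) ≠ 0 := by
    intro i j; rw [hDmap]; exact hφ0 _ (gcD_ne_zero m i j)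
  have hBK : ∀ i, φ (gcB m) + φ (gcC m) * φ (gcX m i) ≠ 0 := by
    intro i
    have e : φ (gcB m) + φ (gcC m) * φ (gcX m i) = φ (gcB m + gcC m * gcX m i) := by
      simp [map_add, map_mul]
    rw [e]; exact hφ0 _ (gcB_ne_zero m i)
  have hgen := gc_main_aux m (φ (gcA m)) (φ (gcB m)) (φ (gcC m))
    (fun i => φ (gcX m i)) (fun j => φ (gcY m j)) hDK hBK
  have hPDK0 : (∏ i : Fin m, ∏ l : Fin m, φ (gcD m i l)) ≠ 0 :=
    Finset.prod_ne_zero_iff.mpr fun i _ => Finset.prod_ne_zero_iff.mpr fun l _ =>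
      hφ0 _ (gcD_ne_zero m i l)
  have hNK : ((Matrix.of fun i j : Fin m =>
        ∏ l ∈ Finset.univ.erase j, gcD m i l).map φ) = Matrix.of fun i j =>
      (∏ l : Fin m, φ (gcD m i l)) * ((Matrix.of fun i j : Fin m =>
        (φ (gcA m) + φ (gcB m) * (φ (gcX m i) + φ (gcY m j))
          + φ (gcC m) * φ (gcX m i) * φ (gcY m j))⁻¹) i j) := by
    ext i j
    show φ (∏ l ∈ Finset.univ.erase j, gcD m i l) = _
    rw [Matrix.of_apply, Matrix.of_apply, hDmap, map_prod,
      eq_mul_inv_iff_mul_eq₀ (hφ0 _ (gcD_ne_zero m i j))]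
    exact Finset.prod_erase_mul _ _ (Finset.mem_univ j)
  apply hφ
  rw [RingHom.map_det, RingHom.mapMatrix_apply, hNK, Matrix.det_mul_column, hgen]
  have hPD : (∏ i : Fin m, ∏ j : Fin m,
      (φ (gcA m) + φ (gcB m) * (φ (gcX m i) + φ (gcY m j))
        + φ (gcC m) * φ (gcX m i) * φ (gcY m j)))
      = ∏ i : Fin m, ∏ l : Fin m, φ (gcD m i l) :=
    Finset.prod_congr rfl fun i _ => Finset.prod_congr rfl fun j _ => hDmap i j
  rw [hPD, ← mul_div_assoc, mul_comm, mul_div_assoc, div_self hPDK0, mul_one]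
  rw [map_mul, map_pow, map_sub, map_mul, map_pow, map_prod]
  congr 1
  refine Finset.prod_congr rfl fun p _ => ?_
  rw [map_mul, map_sub, map_sub]

theorem generalized_cauchy_determinant {F : Type*} [Field F] (m : ℕ)
    (a b c : F) (x y : Fin m → F)
    (h : ∀ i j, a + b * (x i + y j) + c * x i * y j ≠ 0) :
    Matrix.det (Matrix.of fun i j : Fin m => (a + b * (x i + y j) + c * x i * y j)⁻¹) =
      (b ^ 2 - a * c) ^ (m * (m - 1) / 2) *
        (∏ p ∈ Finset.univ.filter (fun p : Fin m × Fin m => p.1 < p.2),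
          (x p.2 - x p.1) * (y p.2 - y p.1)) /
        ∏ i : Fin m, ∏ j : Fin m, (a + b * (x i + y j) + c * x i * y j) := by
  classical
  set g : (Fin 3) ⊕ (Fin m ⊕ Fin m) → F :=
    Sum.elim (fun t : Fin 3 => if t = 0 then a else if t = 1 then b else c)
      (Sum.elim x y) with hg
  set ψ : gcR m →+* F := MvPolynomial.eval₂Hom (Int.castRingHom F) g with hψdef
  have hψA : ψ (gcA m) = a := by simp [hψdef, gcA, hg]
  have hψB : ψ (gcB m) = b := by simp [hψdef, gcB, hg]
  have hψC : ψ (gcC m) = c := by simp [hψdef, gcC, hg]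
  have hψX : ∀ i, ψ (gcX m i) = x i := by intro i; simp [hψdef, gcX, hg]
  have hψY : ∀ j, ψ (gcY m j) = y j := by intro j; simp [hψdef, gcY, hg]
  have hψD : ∀ i j, ψ (gcD m i j) = a + b * (x i + y j) + c * x i * y j := by
    intro i j
    simp only [gcD, map_add, map_mul, hψA, hψB, hψC, hψX, hψY]
  have hdetNF : ((Matrix.of fun i j : Fin m =>
      ∏ l ∈ Finset.univ.erase j, gcD m i l).map ψ).det
      = (b ^ 2 - a * c) ^ (m * (m - 1) / 2) *
        ∏ p ∈ Finset.univ.filter (fun p : Fin m × Fin m => p.1 < p.2),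
          (x p.2 - x p.1) * (y p.2 - y p.1) := by
    rw [← RingHom.mapMatrix_apply, ← RingHom.map_det, gc_poly m, map_mul, map_pow, map_sub, map_mul, map_pow, map_prod,
      hψA, hψB, hψC]
    congr 1
    refine Finset.prod_congr rfl fun p _ => ?_
    rw [map_mul, map_sub, map_sub, hψX, hψX, hψY, hψY]
  have hNF : ((Matrix.of fun i j : Fin m =>
      ∏ l ∈ Finset.univ.erase j, gcD m i l).map ψ) = Matrix.of fun i j =>
      (∏ l : Fin m, (a + b * (x i + y l) + c * x i * y l)) *
        ((Matrix.of fun i j : Fin m => (a + b * (x i + y j) + c * x i * y j)⁻¹) i j) := by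
    ext i j
    show ψ (∏ l ∈ Finset.univ.erase j, gcD m i l) = _
    rw [Matrix.of_apply, Matrix.of_apply, map_prod,
      Finset.prod_congr rfl fun l _ => hψD i l,
      eq_mul_inv_iff_mul_eq₀ (h i j)]
    exact Finset.prod_erase_mul _ _ (Finset.mem_univ j)
  have hPDF0 : (∏ i : Fin m, ∏ j : Fin m, (a + b * (x i + y j) + c * x i * y j)) ≠ 0 :=
    Finset.prod_ne_zero_iff.mpr fun i _ => Finset.prod_ne_zero_iff.mpr fun j _ => h i j
  have key := hdetNF
  rw [hNF, Matrix.det_mul_column] at key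
  rw [eq_div_iff hPDF0, mul_comm]
  exact key
end

section
/- Let V be an n-dimensional vector space over a field with a nondegenerate symmetric bilinear form ⟨·,·⟩, and let (e_i)_{i=1}^n, (f_i)_{i=1}^n be two bases. Then for any m-element subsets S, U ⊆ [n]: Σ_{T ⊆ [n], |T| = m} (-1)^{Σ_{s∈S} s + Σ_{t∈T} t} · det_{i∈S^c, j∈T^c}(⟨e_i, f_j⟩) · det_{i∈U, j∈T}(⟨e_i, f_j⟩) / det_{1≤i,j≤n}(⟨e_i, f_j⟩) = δ_{SU}. -/
/-!
Laplace-expand along the rows `S` the matrix obtained from the Gram matrix `G` by replacing its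
rows `S` with its rows `U`. The expansion is the sum in the statement times `det G`; the matrix is
`G` itself when `S = U` and has two equal rows otherwise.

The sign in the Laplace expansion is that of the shuffle permutation listing `S` and then `Sᶜ` in
increasing order. Moving an element of `S` one step down, to a position outside `S`, composes
the shuffle with an adjacent transposition and lowers `∑ S` by one, so
`sign (shuffle S) * (-1) ^ ∑ S` depends only on `#S`.
-/

open Finset Equiv Equiv.Perm Order

theorem Equiv.swap_strictMonoOn_of_covBy {α : Type*} [LinearOrder α] {a b : α} (hab : a ⋖ b)
    {A : Set α} (hA : ¬(a ∈ A ∧ b ∈ A)) : StrictMonoOn (swap a b) A := by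
  have gap : ∀ c, c ≤ a ∨ b ≤ c := fun c => by
    by_contra! h
    exact hab.2 h.1 h.2
  have := hab.lt
  intro x hx y hy hxy
  rcases gap x with hxa | hbx <;> rcases gap y with hya | hby <;>
  rw [swap_apply_def, swap_apply_def] <;>
  split_ifs <;> subst_vars <;> first | tauto | order

theorem Finset.orderEmbOfFin_map_swap {α : Type*} [LinearOrder α] {a b : α} (hab : a ⋖ b)
    {A A' : Finset α} (hA : ¬(a ∈ A ∧ b ∈ A)) (hA' : A.map (swap a b).toEmbedding = A') {k : ℕ}
    (h : #A = k) (h' : #A' = k) :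
    ⇑(A'.orderEmbOfFin h') = swap a b ∘ A.orderEmbOfFin h := by
  subst hA'
  exact (orderEmbOfFin_unique h' (fun i => mem_map_of_mem _ (A.orderEmbOfFin_mem h i))
    fun _ _ hij => swap_strictMonoOn_of_covBy hab (A := A) hA (A.orderEmbOfFin_mem h _)
      (A.orderEmbOfFin_mem h _) ((A.orderEmbOfFin h).strictMono hij)).symm

theorem Set.mem_of_le_of_forall_covBy {α : Type*} [PartialOrder α] [PredOrder α]
    [IsPredArchimedean α] {S : Set α} (hS : ∀ a b, a ⋖ b → b ∈ S → a ∈ S) {a b : α}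
    (hab : a ≤ b) (hb : b ∈ S) : a ∈ S := by
  induction hab using Pred.rec with
  | rfl => exact hb
  | pred c _ hc =>
    by_cases hmin : IsMin c
    · rwa [hmin.pred_eq]
    · exact hS _ _ (pred_covBy_of_not_isMin hmin) hc

theorem Fin.exists_covBy_notMem_mem {n m : ℕ} {S : Finset (Fin n)} (hS : #S = m)
    (hne : S ≠ ({i | (i : ℕ) < m} : Finset (Fin n))) : ∃ a b, a ⋖ b ∧ a ∉ S ∧ b ∈ S := by
  contrapose! hne
  have hdown (i j : Fin n) (hji : j ≤ i) (hi : i ∈ S) : j ∈ S :=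
    Set.mem_of_le_of_forall_covBy (S := (S : Set (Fin n)))
      (fun a b hab hb => by_contra fun ha => hne a b hab ha hb) hji hi
  ext j
  rw [mem_filter_univ, ← hS, ← Fin.lt_card_filter_univ_iff_apply_of_imp (· ∈ S) hdown,
    filter_mem_eq_inter, univ_inter]

theorem Finset.sum_val_map_swap_add_one {n : ℕ} {a b : Fin n} (hab : a ⋖ b) {S : Finset (Fin n)}
    (ha : a ∉ S) (hb : b ∈ S) :
    ∑ x ∈ S.map (swap a b).toEmbedding, (x : ℕ) + 1 = ∑ x ∈ S, (x : ℕ) := by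
  have hab' : (a : ℕ) + 1 = b := by simpa using hab
  have fixed : ∀ x ∈ S.erase b, (swap a b x : ℕ) = x := fun x hx => by
    rw [swap_apply_of_ne_of_ne (ne_of_mem_of_not_mem (mem_of_mem_erase hx) ha)
      (ne_of_mem_erase hx)]
  rw [sum_map, ← add_sum_erase _ _ hb, ← add_sum_erase _ _ hb]
  simp only [toEmbedding_apply, swap_apply_right]
  rw [sum_congr rfl fixed, add_right_comm, hab']

def finSumFinSubEquiv {n m : ℕ} (h : m ≤ n) : Fin m ⊕ Fin (n - m) ≃ Fin n :=
  finSumFinEquiv.trans (finCongr (Nat.add_sub_of_le h))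

namespace Finset

variable {n m : ℕ}

theorem card_compl_fin {S : Finset (Fin n)} (hS : #S = m) : #Sᶜ = n - m := by
  rw [card_compl, hS, Fintype.card_fin]

theorem le_of_card_eq_fin {S : Finset (Fin n)} (hS : #S = m) : m ≤ n :=
  hS ▸ (card_le_univ S).trans_eq (Fintype.card_fin n)

noncomputable def finSumComplEquiv (S : Finset (Fin n)) (hS : #S = m) :
    Fin m ⊕ Fin (n - m) ≃ Fin n :=
  (sumCongr (S.orderIsoOfFin hS).toEquiv
    ((Sᶜ.orderIsoOfFin (card_compl_fin hS)).toEquiv.trans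
      (subtypeEquivRight fun _ => mem_compl))).trans
    (sumCompl (· ∈ S))

@[simp] theorem finSumComplEquiv_inl (S : Finset (Fin n)) (hS : #S = m) (k : Fin m) :
    S.finSumComplEquiv hS (.inl k) = S.orderEmbOfFin hS k := rfl

@[simp] theorem finSumComplEquiv_inr (S : Finset (Fin n)) (hS : #S = m) (k : Fin (n - m)) :
    S.finSumComplEquiv hS (.inr k) = Sᶜ.orderEmbOfFin (card_compl_fin hS) k := rfl

theorem finSumComplEquiv_map_swap {a b : Fin n} (hab : a ⋖ b) {S : Finset (Fin n)}
    (hS : #S = m) (ha : a ∉ S) (hb : b ∈ S) :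
    finSumComplEquiv (S.map (swap a b).toEmbedding) ((card_map _).trans hS) =
      (S.finSumComplEquiv hS).trans (swap a b) := by
  ext (k | k) : 1
  · exact congrFun (orderEmbOfFin_map_swap hab (by tauto) rfl hS ((card_map _).trans hS)) k
  · refine congrFun (orderEmbOfFin_map_swap hab (by simp [hb]) ?_ (card_compl_fin hS)
      (card_compl_fin ((card_map _).trans hS))) k
    ext x
    simp

noncomputable def shufflePerm (S : Finset (Fin n)) (hS : #S = m) : Perm (Fin n) :=
  (finSumFinSubEquiv (le_of_card_eq_fin hS)).symm.trans (S.finSumComplEquiv hS)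

theorem shufflePerm_map_swap {a b : Fin n} (hab : a ⋖ b) {S : Finset (Fin n)} (hS : #S = m)
    (ha : a ∉ S) (hb : b ∈ S) :
    shufflePerm (S.map (swap a b).toEmbedding) ((card_map _).trans hS) =
      swap a b * shufflePerm S hS := by
  rw [shufflePerm, finSumComplEquiv_map_swap hab hS ha hb]
  rfl

theorem sign_shufflePerm_map_swap_mul {a b : Fin n} (hab : a ⋖ b) {S : Finset (Fin n)}
    (hS : #S = m) (ha : a ∉ S) (hb : b ∈ S) :
    sign (shufflePerm (S.map (swap a b).toEmbedding) ((card_map _).trans hS)) *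
        (-1) ^ ∑ x ∈ S.map (swap a b).toEmbedding, (x : ℕ) =
      sign (shufflePerm S hS) * (-1) ^ ∑ x ∈ S, (x : ℕ) := by
  rw [shufflePerm_map_swap hab hS ha hb, ← sum_val_map_swap_add_one hab ha hb, map_mul,
    sign_swap hab.ne, pow_succ]
  simp

theorem sign_shufflePerm_mul_neg_one_pow_eq {S : Finset (Fin n)} (hS : #S = m)
    (h₀ : #({i | (i : ℕ) < m} : Finset (Fin n)) = m) :
    sign (shufflePerm S hS) * (-1) ^ ∑ s ∈ S, (s : ℕ) =
      sign (shufflePerm _ h₀) * (-1) ^ ∑ s ∈ ({i | (i : ℕ) < m} : Finset (Fin n)), (s : ℕ) := by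
  induction hsum : ∑ s ∈ S, (s : ℕ) using Nat.strong_induction_on generalizing S with
  | _ k ih =>
  by_cases hS₀ : S = ({i | (i : ℕ) < m} : Finset (Fin n))
  · subst hS₀ hsum
    rfl
  obtain ⟨a, b, hab, ha, hb⟩ := Fin.exists_covBy_notMem_mem hS hS₀
  have hlt := sum_val_map_swap_add_one hab ha hb
  rw [← hsum, ← sign_shufflePerm_map_swap_mul hab hS ha hb]
  exact ih _ (by omega) _ rfl

theorem sign_shufflePerm_mul_sign_shufflePerm {S T : Finset (Fin n)} (hS : #S = m)
    (hT : #T = m) :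
    sign (shufflePerm S hS) * sign (shufflePerm T hT) =
      (-1) ^ (∑ s ∈ S, ((s : ℕ) + 1) + ∑ t ∈ T, ((t : ℕ) + 1)) := by
  have h₀ : #({i | (i : ℕ) < m} : Finset (Fin n)) = m := by
    rw [Fin.card_filter_val_lt, min_eq_right (le_of_card_eq_fin hS)]
  have key := (sign_shufflePerm_mul_neg_one_pow_eq hS h₀).trans
    (sign_shufflePerm_mul_neg_one_pow_eq hT h₀).symm
  set σ := sign (shufflePerm S hS)
  set τ := sign (shufflePerm T hT)
  set p := ((-1 : ℤˣ) ^ ∑ s ∈ S, (s : ℕ))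
  set q := ((-1 : ℤˣ) ^ ∑ t ∈ T, (t : ℕ))
  have hστ : σ * τ = p * q :=
    calc σ * τ = (σ * p) * (τ * p) := by
          rw [mul_mul_mul_comm, Int.units_mul_self, mul_one, mul_comm]
      _ = p * q := by rw [key, mul_mul_mul_comm, Int.units_mul_self, one_mul, mul_comm]
  simp only [hστ, sum_add_distrib, sum_const, hS, hT, smul_eq_mul, mul_one, pow_add]
  rw [mul_mul_mul_comm _ ((-1) ^ m), Int.units_mul_self, mul_one]

noncomputable def permOfBlocks (S : Finset (Fin n)) (hS : #S = m)
    (p : {T : Finset (Fin n) // #T = m} × Perm (Fin m) × Perm (Fin (n - m))) : Perm (Fin n) :=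
  (p.1.1.finSumComplEquiv p.1.2).symm.trans
    ((Equiv.sumCongr p.2.1 p.2.2).trans (S.finSumComplEquiv hS))

section permOfBlocks

variable (S : Finset (Fin n)) (hS : #S = m) (T : {T : Finset (Fin n) // #T = m})
  (α : Perm (Fin m)) (β : Perm (Fin (n - m)))

theorem permOfBlocks_apply_finSumComplEquiv (x : Fin m ⊕ Fin (n - m)) :
    permOfBlocks S hS (T, α, β) (T.1.finSumComplEquiv T.2 x) =
      S.finSumComplEquiv hS (Sum.map α β x) := by
  simp [permOfBlocks]

@[simp] theorem permOfBlocks_apply_orderEmbOfFin (k : Fin m) :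
    permOfBlocks S hS (T, α, β) (T.1.orderEmbOfFin T.2 k) = S.orderEmbOfFin hS (α k) :=
  permOfBlocks_apply_finSumComplEquiv S hS T α β (.inl k)

@[simp] theorem permOfBlocks_apply_orderEmbOfFin_compl (k : Fin (n - m)) :
    permOfBlocks S hS (T, α, β) (T.1ᶜ.orderEmbOfFin (card_compl_fin T.2) k) =
      Sᶜ.orderEmbOfFin (card_compl_fin hS) (β k) :=
  permOfBlocks_apply_finSumComplEquiv S hS T α β (.inr k)

theorem permOfBlocks_apply_mem_iff (x : Fin n) :
    permOfBlocks S hS (T, α, β) x ∈ S ↔ x ∈ T.1 := by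
  obtain ⟨y, rfl⟩ := (T.1.finSumComplEquiv T.2).surjective x
  rw [permOfBlocks_apply_finSumComplEquiv]
  rcases y with k | k
  · simp [orderEmbOfFin_mem]
  · simp only [Sum.map_inr, finSumComplEquiv_inr]
    exact iff_of_false (mem_compl.1 (orderEmbOfFin_mem _ _ _))
      (mem_compl.1 (orderEmbOfFin_mem _ _ _))

theorem permOfBlocks_injective : Function.Injective (permOfBlocks S hS) := by
  rintro ⟨T, α, β⟩ ⟨T', α', β'⟩ h
  obtain rfl : T = T' := Subtype.ext <| Finset.ext fun x => by
    have := (permOfBlocks_apply_mem_iff S hS T α β x).symm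
    rwa [h, permOfBlocks_apply_mem_iff] at this
  have hαβ : sumCongrHom _ _ (α, β) = sumCongrHom _ _ (α', β') := by
    ext x : 1
    have := congrArg (· (T.1.finSumComplEquiv T.2 x)) h
    simpa [permOfBlocks_apply_finSumComplEquiv] using this
  rw [sumCongrHom_injective hαβ]

theorem permOfBlocks_bijective : Function.Bijective (permOfBlocks S hS) := by
  refine (Fintype.bijective_iff_injective_and_card _).2 ⟨permOfBlocks_injective S hS, ?_⟩
  rw [Fintype.card_prod, Fintype.card_prod, Fintype.card_perm, Fintype.card_perm,
    Fintype.card_finset_len, Fintype.card_perm, Fintype.card_fin, Fintype.card_fin,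
    Fintype.card_fin, ← Nat.choose_mul_factorial_mul_factorial (le_of_card_eq_fin hS), mul_assoc]

theorem permOfBlocks_eq_mul :
    permOfBlocks S hS (T, α, β) = shufflePerm S hS *
      (finSumFinSubEquiv (le_of_card_eq_fin hS)).permCongr (Equiv.sumCongr α β) *
        (shufflePerm T.1 T.2)⁻¹ := by
  ext x
  simp [permOfBlocks, shufflePerm, Perm.mul_apply, permCongr_apply, Perm.inv_def]

theorem sign_permOfBlocks :
    sign (permOfBlocks S hS (T, α, β)) =
      (-1) ^ (∑ s ∈ S, ((s : ℕ) + 1) + ∑ t ∈ T.1, ((t : ℕ) + 1)) * (sign α * sign β) := by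
  rw [permOfBlocks_eq_mul, map_mul, map_mul, sign_inv, sign_permCongr, sign_sumCongr,
    mul_right_comm, sign_shufflePerm_mul_sign_shufflePerm]

theorem prod_permOfBlocks {R : Type*} [CommMonoid R] (M : Matrix (Fin n) (Fin n) R) :
    ∏ j, M (permOfBlocks S hS (T, α, β) j) j =
      (∏ k, M (S.orderEmbOfFin hS (α k)) (T.1.orderEmbOfFin T.2 k)) *
        ∏ k, M (Sᶜ.orderEmbOfFin (card_compl_fin hS) (β k))
          (T.1ᶜ.orderEmbOfFin (card_compl_fin T.2) k) := by
  rw [← (T.1.finSumComplEquiv T.2).prod_comp, Fintype.prod_sum_type]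
  simp only [finSumComplEquiv_inl, finSumComplEquiv_inr, permOfBlocks_apply_orderEmbOfFin,
    permOfBlocks_apply_orderEmbOfFin_compl]

end permOfBlocks

end Finset

namespace Matrix

variable {R : Type*} [CommRing R] {n m : ℕ}

theorem det_eq_sum_mul_det_submatrix_compl (M : Matrix (Fin n) (Fin n) R) (S : Finset (Fin n))
    (hS : #S = m) :
    M.det = ∑ T : {T : Finset (Fin n) // #T = m},
      (-1) ^ (∑ s ∈ S, ((s : ℕ) + 1) + ∑ t ∈ T.1, ((t : ℕ) + 1)) *
        (M.submatrix (Sᶜ.orderEmbOfFin (card_compl_fin hS))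
          (T.1ᶜ.orderEmbOfFin (card_compl_fin T.2))).det *
        (M.submatrix (S.orderEmbOfFin hS) (T.1.orderEmbOfFin T.2)).det := by
  rw [det_apply', ← (permOfBlocks_bijective S hS).sum_comp, Fintype.sum_prod_type]
  refine sum_congr rfl fun T _ => ?_
  simp_rw [Fintype.sum_prod_type, det_apply', mul_sum, sum_mul, sign_permOfBlocks,
    prod_permOfBlocks]
  refine sum_congr rfl fun α _ => sum_congr rfl fun β _ => ?_
  simp only [submatrix_apply, Units.val_mul, Int.cast_mul, Units.val_pow_eq_pow_val,
    Units.val_neg, Units.val_one, Int.cast_pow, Int.cast_neg, Int.cast_one]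
  ring

theorem sum_mul_det_submatrix_compl_eq_ite (M : Matrix (Fin n) (Fin n) R)
    (S U : Finset (Fin n)) (hS : #S = m) (hU : #U = m) :
    ∑ T : {T : Finset (Fin n) // #T = m},
      (-1) ^ (∑ s ∈ S, ((s : ℕ) + 1) + ∑ t ∈ T.1, ((t : ℕ) + 1)) *
        (M.submatrix (Sᶜ.orderEmbOfFin (card_compl_fin hS))
          (T.1ᶜ.orderEmbOfFin (card_compl_fin T.2))).det *
        (M.submatrix (U.orderEmbOfFin hU) (T.1.orderEmbOfFin T.2)).det =
      if S = U then M.det else 0 := by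
  split_ifs with hSU
  · subst hSU
    exact (M.det_eq_sum_mul_det_submatrix_compl S hS).symm
  -- `M.submatrix r id` is `M` with its rows `S` replaced by its rows `U`
  set r : Fin n → Fin n := Sum.elim (U.orderEmbOfFin hU) (Sᶜ.orderEmbOfFin (card_compl_fin hS)) ∘
    (S.finSumComplEquiv hS).symm
  have hr (x) : r (S.finSumComplEquiv hS x) =
      Sum.elim (U.orderEmbOfFin hU) (Sᶜ.orderEmbOfFin (card_compl_fin hS)) x := by
    simp [r]
  have hrS (k) : r (S.orderEmbOfFin hS k) = U.orderEmbOfFin hU k := hr (.inl k)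
  have hrSc (k) : r (Sᶜ.orderEmbOfFin (card_compl_fin hS) k) =
      Sᶜ.orderEmbOfFin (card_compl_fin hS) k := hr (.inr k)
  have hlap := (M.submatrix r id).det_eq_sum_mul_det_submatrix_compl S hS
  simp only [submatrix_submatrix, Function.comp_def, hrS, hrSc] at hlap
  refine hlap.symm.trans ?_
  obtain ⟨u, hu, huS⟩ :=
    not_subset.1 fun h => hSU (eq_of_subset_of_card_le h (by rw [hS, hU])).symm
  obtain ⟨k, rfl⟩ : u ∈ Set.range (U.orderEmbOfFin hU) := by rwa [range_orderEmbOfFin]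
  obtain ⟨j, hj⟩ : U.orderEmbOfFin hU k ∈ Set.range (Sᶜ.orderEmbOfFin (card_compl_fin hS)) := by
    rwa [range_orderEmbOfFin, coe_compl, Set.mem_compl_iff, mem_coe]
  refine det_zero_of_row_eq (i := S.orderEmbOfFin hS k)
    (j := Sᶜ.orderEmbOfFin (card_compl_fin hS) j) ?_ ?_
  · exact ne_of_mem_of_not_mem (orderEmbOfFin_mem _ _ _) (mem_compl.1 (orderEmbOfFin_mem _ _ _))
  · funext c
    rw [submatrix_apply, submatrix_apply, hrS, hrSc, hj]

end Matrix

theorem LinearMap.BilinForm.Nondegenerate.det_gram_ne_zero {F V ι : Type*} [Field F]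
    [AddCommGroup V] [Module F V] [Fintype ι] [DecidableEq ι] {B : LinearMap.BilinForm F V}
    (hB : B.Nondegenerate) (e f : Module.Basis ι F V) :
    (Matrix.of fun i j => B (e i) (f j)).det ≠ 0 := by
  rw [← Matrix.nondegenerate_iff_det_ne_zero]
  convert (LinearMap.nondegenerate_toMatrix₂_iff e f).2 hB
  ext i j
  rw [LinearMap.toMatrix₂_apply, Matrix.of_apply]

theorem complementary_minor_orthogonality {F : Type*} [Field F] {n m : ℕ}
    (V : Type*) [AddCommGroup V] [Module F V]
    (B : LinearMap.BilinForm F V)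
    (hB : B.Nondegenerate)
    (e f : Module.Basis (Fin n) F V)
    (S U : Finset (Fin n)) (hS : S.card = m) (hU : U.card = m) :
    (∑ T : {T : Finset (Fin n) // T.card = m},
      (-1 : F) ^ ((∑ s ∈ S, ((s : ℕ) + 1)) + ∑ t ∈ T.1, ((t : ℕ) + 1)) *
        Matrix.det (Matrix.of fun i j : Fin (n - m) =>
          B (e ((Sᶜ).orderEmbOfFin
                (by rw [Finset.card_compl, hS, Fintype.card_fin]) i))
            (f ((T.1ᶜ).orderEmbOfFin
                (by rw [Finset.card_compl, T.2, Fintype.card_fin]) j))) *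
        Matrix.det (Matrix.of fun i j : Fin m =>
          B (e (U.orderEmbOfFin hU i)) (f (T.1.orderEmbOfFin T.2 j))) /
        Matrix.det (Matrix.of fun i j : Fin n => B (e i) (f j))) =
      if S = U then 1 else 0 := by
  rw [← sum_div, div_eq_iff (hB.det_gram_ne_zero e f), ite_mul, one_mul, zero_mul]
  exact (Matrix.of fun i j => B (e i) (f j)).sum_mul_det_submatrix_compl_eq_ite S U hS hU
end

section
/- Let G be an invertible n×n matrix over a field, and S, U ⊆ [n] subsets of cardinality m. Then Σ_{T ⊆ [n], |T| = m} (-1)^{Σ_{s∈S} s + Σ_{t∈T} t} det(G[S^c, T^c]) · det(G[U, T]) = δ_{SU} · det(G), where G[A, B] denotes the submatrix with rows indexed by A and columns indexed by B (in increasing order). -/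
open Finset

namespace CMAux

variable {n m : ℕ}

lemma card_compl_eq (S : Finset (Fin n)) (hS : S.card = m) : Sᶜ.card = n - m := by
  rw [Finset.card_compl, hS, Fintype.card_fin]

lemma add_sub_eq (S : Finset (Fin n)) (hS : S.card = m) : m + (n - m) = n := by
  have h := Finset.card_le_univ S
  simp only [hS, Finset.card_univ, Fintype.card_fin] at h
  omega

/-- The map sending `Fin m ⊕ Fin (n-m)` to `Fin n` via the order embeddings of `S` and `Sᶜ`. -/
def f (S : Finset (Fin n)) (hS : S.card = m) : Fin m ⊕ Fin (n - m) → Fin n :=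
  Sum.elim (S.orderEmbOfFin hS) (Sᶜ.orderEmbOfFin (card_compl_eq S hS))

lemma f_bij (S : Finset (Fin n)) (hS : S.card = m) : Function.Bijective (f S hS) := by
  rw [Fintype.bijective_iff_injective_and_card]
  refine ⟨?_, by simp [add_sub_eq S hS]⟩
  rintro (a | a) (b | b) h <;> simp only [f, Sum.elim_inl, Sum.elim_inr] at h
  · exact congrArg Sum.inl ((S.orderEmbOfFin hS).injective h)
  · exfalso
    have h1 := S.orderEmbOfFin_mem hS a
    have h2 := Sᶜ.orderEmbOfFin_mem (card_compl_eq S hS) b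
    rw [Finset.mem_compl] at h2
    exact h2 (h ▸ h1)
  · exfalso
    have h1 := S.orderEmbOfFin_mem hS b
    have h2 := Sᶜ.orderEmbOfFin_mem (card_compl_eq S hS) a
    rw [Finset.mem_compl] at h2
    exact h2 (h ▸ h1)
  · exact congrArg Sum.inr ((Sᶜ.orderEmbOfFin (card_compl_eq S hS)).injective h)

noncomputable def ES (S : Finset (Fin n)) (hS : S.card = m) : Fin m ⊕ Fin (n - m) ≃ Fin n :=
  Equiv.ofBijective _ (f_bij S hS)

@[simp] lemma ES_inl (S : Finset (Fin n)) (hS : S.card = m) (k : Fin m) :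
    ES S hS (Sum.inl k) = S.orderEmbOfFin hS k := rfl

@[simp] lemma ES_inr (S : Finset (Fin n)) (hS : S.card = m) (k : Fin (n - m)) :
    ES S hS (Sum.inr k) = Sᶜ.orderEmbOfFin (card_compl_eq S hS) k := rfl

def eqv (hmn : m + (n - m) = n) : Fin m ⊕ Fin (n - m) ≃ Fin n :=
  finSumFinEquiv.trans (finCongr hmn)

noncomputable def ρ (hmn : m + (n - m) = n) (S : Finset (Fin n)) (hS : S.card = m) : Equiv.Perm (Fin n) :=
  (eqv hmn).symm.trans (ES S hS)

noncomputable def sgn (hmn : m + (n - m) = n) (S : Finset (Fin n)) (hS : S.card = m) : ℤˣ :=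
  Equiv.Perm.sign (ρ hmn S hS)

section move
variable {S : Finset (Fin n)} {p s : Fin n}

lemma card_move (hS : S.card = m) (hsS : s ∈ S) (hpS : p ∉ S) :
    (insert p (S.erase s)).card = m := by
  rw [Finset.card_insert_of_notMem (fun h => hpS (Finset.mem_of_mem_erase h)),
    Finset.card_erase_of_mem hsS, hS]
  have : 1 ≤ m := by
    rw [← hS]; exact Finset.card_pos.2 ⟨s, hsS⟩
  omega

lemma ps_ne (hps : (p : ℕ) + 1 = (s : ℕ)) : p ≠ s := fun h => by rw [h] at hps; omega

lemma emb_move (hS : S.card = m) (hps : (p : ℕ) + 1 = (s : ℕ)) (hsS : s ∈ S) (hpS : p ∉ S)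
    (k : Fin m) :
    (insert p (S.erase s)).orderEmbOfFin (card_move hS hsS hpS) k
      = Equiv.swap p s (S.orderEmbOfFin hS k) := by
  have hmem : ∀ x : Fin m, Equiv.swap p s (S.orderEmbOfFin hS x) ∈ insert p (S.erase s) := by
    intro x
    rcases eq_or_ne (S.orderEmbOfFin hS x) s with h | h
    · rw [h, Equiv.swap_apply_right]; exact Finset.mem_insert_self _ _
    · have hne : S.orderEmbOfFin hS x ≠ p := fun hc => hpS (hc ▸ S.orderEmbOfFin_mem hS x)
      rw [Equiv.swap_apply_of_ne_of_ne hne h]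
      exact Finset.mem_insert_of_mem (Finset.mem_erase.2 ⟨h, S.orderEmbOfFin_mem hS x⟩)
  have hmono : StrictMono fun x => Equiv.swap p s (S.orderEmbOfFin hS x) := by
    intro a b hab
    dsimp only
    have hlt : S.orderEmbOfFin hS a < S.orderEmbOfFin hS b := (S.orderEmbOfFin hS).strictMono hab
    set x := S.orderEmbOfFin hS a with hx
    set y := S.orderEmbOfFin hS b with hy
    have hxS : x ∈ S := S.orderEmbOfFin_mem hS a
    have hyS : y ∈ S := S.orderEmbOfFin_mem hS b
    have hxp : x ≠ p := fun hc => hpS (hc ▸ hxS)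
    have hyp : y ≠ p := fun hc => hpS (hc ▸ hyS)
    rcases eq_or_ne x s with hxs | hxs
    · have hys : y ≠ s := by rw [← hxs]; exact ne_of_gt hlt
      rw [hxs, Equiv.swap_apply_right, Equiv.swap_apply_of_ne_of_ne hyp hys]
      have h1 : (x : ℕ) < (y : ℕ) := hlt
      have h2 : (x : ℕ) = (s : ℕ) := congrArg Fin.val hxs
      rw [Fin.lt_def]
      omega
    · rcases eq_or_ne y s with hys | hys
      · rw [hys, Equiv.swap_apply_right, Equiv.swap_apply_of_ne_of_ne hxp hxs]
        have h1 : (x : ℕ) < (y : ℕ) := hlt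
        have h2 : (y : ℕ) = (s : ℕ) := congrArg Fin.val hys
        have h3 : (x : ℕ) ≠ (p : ℕ) := fun hc => hxp (Fin.ext hc)
        rw [Fin.lt_def]
        omega
      · rw [Equiv.swap_apply_of_ne_of_ne hxp hxs, Equiv.swap_apply_of_ne_of_ne hyp hys]
        exact hlt
  exact (congrFun (Finset.orderEmbOfFin_unique (card_move hS hsS hpS) hmem hmono) k).symm

lemma compl_emb_move (hS : S.card = m) (hps : (p : ℕ) + 1 = (s : ℕ)) (hsS : s ∈ S) (hpS : p ∉ S)
    (k : Fin (n - m)) :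
    (insert p (S.erase s))ᶜ.orderEmbOfFin (card_compl_eq _ (card_move hS hsS hpS)) k
      = Equiv.swap p s (Sᶜ.orderEmbOfFin (card_compl_eq S hS) k) := by
  have hsS' : s ∉ insert p (S.erase s) := by
    simp only [Finset.mem_insert, Finset.mem_erase]
    push_neg
    exact ⟨(ps_ne hps).symm, fun h => absurd rfl h⟩
  have hmem : ∀ x : Fin (n - m),
      Equiv.swap p s (Sᶜ.orderEmbOfFin (card_compl_eq S hS) x) ∈ (insert p (S.erase s))ᶜ := by
    intro x
    have hxc : Sᶜ.orderEmbOfFin (card_compl_eq S hS) x ∈ Sᶜ := Sᶜ.orderEmbOfFin_mem _ x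
    rw [Finset.mem_compl] at hxc
    rcases eq_or_ne (Sᶜ.orderEmbOfFin (card_compl_eq S hS) x) p with h | h
    · rw [h, Equiv.swap_apply_left, Finset.mem_compl]
      exact hsS'
    · have hns : Sᶜ.orderEmbOfFin (card_compl_eq S hS) x ≠ s := fun hc => hxc (hc ▸ hsS)
      rw [Equiv.swap_apply_of_ne_of_ne h hns, Finset.mem_compl, Finset.mem_insert]
      push_neg
      exact ⟨h, fun hc => hxc (Finset.mem_of_mem_erase hc)⟩
  have hmono : StrictMono fun x => Equiv.swap p s (Sᶜ.orderEmbOfFin (card_compl_eq S hS) x) := by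
    intro a b hab
    dsimp only
    have hlt := (Sᶜ.orderEmbOfFin (card_compl_eq S hS)).strictMono hab
    set x := Sᶜ.orderEmbOfFin (card_compl_eq S hS) a with hx
    set y := Sᶜ.orderEmbOfFin (card_compl_eq S hS) b with hy
    have hxS : x ∉ S := Finset.mem_compl.1 (Sᶜ.orderEmbOfFin_mem _ a)
    have hyS : y ∉ S := Finset.mem_compl.1 (Sᶜ.orderEmbOfFin_mem _ b)
    have hxs : x ≠ s := fun hc => hxS (hc ▸ hsS)
    have hys : y ≠ s := fun hc => hyS (hc ▸ hsS)
    rcases eq_or_ne x p with hxp | hxp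
    · have hyp : y ≠ p := by rw [← hxp]; exact ne_of_gt hlt
      rw [hxp, Equiv.swap_apply_left, Equiv.swap_apply_of_ne_of_ne hyp hys]
      have h1 : (x : ℕ) < (y : ℕ) := hlt
      have h2 : (x : ℕ) = (p : ℕ) := congrArg Fin.val hxp
      have h3 : (y : ℕ) ≠ (s : ℕ) := fun hc => hys (Fin.ext hc)
      rw [Fin.lt_def]
      omega
    · rcases eq_or_ne y p with hyp | hyp
      · rw [hyp, Equiv.swap_apply_left, Equiv.swap_apply_of_ne_of_ne hxp hxs]
        have h1 : (x : ℕ) < (y : ℕ) := hlt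
        have h2 : (y : ℕ) = (p : ℕ) := congrArg Fin.val hyp
        rw [Fin.lt_def]
        omega
      · rw [Equiv.swap_apply_of_ne_of_ne hxp hxs, Equiv.swap_apply_of_ne_of_ne hyp hys]
        exact hlt
  exact (congrFun (Finset.orderEmbOfFin_unique _ hmem hmono) k).symm

lemma sgn_move (hmn : m + (n - m) = n) (hS : S.card = m)
    (hps : (p : ℕ) + 1 = (s : ℕ)) (hsS : s ∈ S) (hpS : p ∉ S) :
    sgn hmn (insert p (S.erase s)) (card_move hS hsS hpS) = - sgn hmn S hS := by
  have hES : ∀ x : Fin m ⊕ Fin (n - m),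
      ES (insert p (S.erase s)) (card_move hS hsS hpS) x = Equiv.swap p s (ES S hS x) := by
    rintro (k | k)
    · exact emb_move hS hps hsS hpS k
    · exact compl_emb_move hS hps hsS hpS k
  have hρ : ρ hmn (insert p (S.erase s)) (card_move hS hsS hpS)
      = Equiv.swap p s * ρ hmn S hS := by
    apply Equiv.ext
    intro j
    rw [Equiv.Perm.mul_apply]
    simp only [ρ, Equiv.trans_apply]
    exact hES _
  rw [sgn, sgn, hρ, map_mul, Equiv.Perm.sign_swap (ps_ne hps)]
  simp

end move
lemma card_filter_lt (k : ℕ) (hk : k ≤ n) :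
    (Finset.filter (fun i : Fin n => (i : ℕ) < k) univ).card = k := by
  have : (Finset.filter (fun i : Fin n => (i : ℕ) < k) univ)
      = Finset.map (Fin.castLEEmb hk) univ := by
    ext i
    simp only [Finset.mem_filter, Finset.mem_univ, true_and, Finset.mem_map]
    constructor
    · intro h
      exact ⟨⟨(i : ℕ), h⟩, Fin.ext rfl⟩
    · rintro ⟨a, rfl⟩
      exact a.isLt
  rw [this, Finset.card_map, Finset.card_univ, Fintype.card_fin]

/-- base set: `{0, ..., m-1}` inside `Fin n`. -/
def base (n m : ℕ) : Finset (Fin n) := Finset.filter (fun i : Fin n => (i : ℕ) < m) univ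

lemma base_card (hmn : m + (n - m) = n) : (base n m).card = m :=
  card_filter_lt (n := n) m (by omega)

lemma sgn_eq_base (hmn : m + (n - m) = n) :
    ∀ (N : ℕ) (S : Finset (Fin n)) (hS : S.card = m), (∑ s ∈ S, (s : ℕ)) = N →
      sgn hmn S hS * (-1) ^ (∑ s ∈ S, (s : ℕ))
        = sgn hmn (base n m) (base_card hmn) * (-1) ^ (∑ s ∈ base n m, (s : ℕ)) := by
  intro N
  induction N using Nat.strong_induction_on with
  | _ N ih =>
    intro S hS hN
    by_cases hex : ∃ s ∈ S, (s : ℕ) ≠ 0 ∧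
        (⟨(s : ℕ) - 1, lt_of_le_of_lt (Nat.sub_le _ _) s.isLt⟩ : Fin n) ∉ S
    · obtain ⟨s, hsS, hs0, hpS⟩ := hex
      set p : Fin n := ⟨(s : ℕ) - 1, lt_of_le_of_lt (Nat.sub_le _ _) s.isLt⟩ with hp
      have hps : (p : ℕ) + 1 = (s : ℕ) := by simp [hp]; omega
      set S' := insert p (S.erase s) with hS'
      have hcard : S'.card = m := card_move hS hsS hpS
      have hsum : (∑ t ∈ S', (t : ℕ)) = N - 1 := by
        have h2 : (∑ x ∈ S.erase s, (x : ℕ)) + (s : ℕ) = ∑ x ∈ S, (x : ℕ) :=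
          Finset.sum_erase_add S _ hsS
        rw [hS', Finset.sum_insert (fun h => hpS (Finset.mem_of_mem_erase h))]
        omega
      have hlt : N - 1 < N := by
        have : 1 ≤ N := by
          rw [← hN]
          calc 1 ≤ (s : ℕ) := by omega
          _ ≤ ∑ t ∈ S, (t : ℕ) := Finset.single_le_sum (fun i _ => Nat.zero_le _) hsS
        omega
      have key := ih (N - 1) hlt S' hcard hsum
      rw [← key, sgn_move hmn hS hps hsS hpS, hsum, hN]
      have h1 : 1 ≤ N := by omega
      obtain ⟨N', rfl⟩ : ∃ N', N = N' + 1 := ⟨N - 1, by omega⟩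
      simp only [Nat.add_sub_cancel]
      rw [pow_succ]
      simp [mul_neg, neg_mul, mul_neg_one]
    · push_neg at hex
      have hdown : ∀ (k : ℕ) (s : Fin n), s ∈ S → ∀ j : Fin n, (j : ℕ) + k = (s : ℕ) → j ∈ S := by
        intro k
        induction k with
        | zero =>
          intro s hs j hj
          have : j = s := Fin.ext (by omega)
          rwa [this]
        | succ k ihk =>
          intro s hs j hj
          have hs0 : (s : ℕ) ≠ 0 := by omega
          have hpred := hex s hs hs0
          exact ihk _ hpred j (by simp; omega)
      have hSeq : S = base n m := by
        have hsub : S ⊆ base n m := by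
          intro i hi
          have hIic : ∀ j : Fin n, (j : ℕ) ≤ (i : ℕ) → j ∈ S := by
            intro j hj
            exact hdown ((i : ℕ) - (j : ℕ)) i hi j (by omega)
          have hsubJ : (Finset.filter (fun j : Fin n => (j : ℕ) < (i : ℕ) + 1) univ) ⊆ S := by
            intro j hj
            rw [Finset.mem_filter] at hj
            exact hIic j (by omega)
          have hcardJ := Finset.card_le_card hsubJ
          rw [card_filter_lt (n := n) ((i : ℕ) + 1) i.isLt, hS] at hcardJ
          simp only [base, Finset.mem_filter, Finset.mem_univ, true_and]
          omega
        exact Finset.eq_of_subset_of_card_le hsub (by rw [hS, base_card hmn])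
      subst hSeq
      rfl

lemma sgn_mul_sgn (hmn : m + (n - m) = n) (S T : Finset (Fin n))
    (hS : S.card = m) (hT : T.card = m) :
    sgn hmn S hS * sgn hmn T hT = (-1) ^ ((∑ s ∈ S, (s : ℕ)) + ∑ t ∈ T, (t : ℕ)) := by
  have hSb := sgn_eq_base hmn _ S hS rfl
  have hTb := sgn_eq_base hmn _ T hT rfl
  have h : sgn hmn S hS * (-1) ^ (∑ s ∈ S, (s : ℕ))
      = sgn hmn T hT * (-1) ^ (∑ t ∈ T, (t : ℕ)) := hSb.trans hTb.symm
  have hx : ((-1 : ℤˣ) ^ (∑ s ∈ S, (s : ℕ))) * ((-1) ^ (∑ s ∈ S, (s : ℕ))) = 1 :=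
    Int.units_mul_self _
  have hy : ((-1 : ℤˣ) ^ (∑ t ∈ T, (t : ℕ))) * ((-1) ^ (∑ t ∈ T, (t : ℕ))) = 1 :=
    Int.units_mul_self _
  have hT2 : sgn hmn T hT * sgn hmn T hT = 1 := Int.units_mul_self _
  have h1 : sgn hmn S hS = sgn hmn T hT * (-1) ^ (∑ t ∈ T, (t : ℕ))
      * (-1) ^ (∑ s ∈ S, (s : ℕ)) := by
    have := congrArg (· * (-1 : ℤˣ) ^ (∑ s ∈ S, (s : ℕ))) h
    simpa [mul_assoc, hx] using this
  rw [h1, pow_add]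
  calc sgn hmn T hT * (-1) ^ (∑ t ∈ T, (t : ℕ)) * (-1) ^ (∑ s ∈ S, (s : ℕ)) * sgn hmn T hT
      = (sgn hmn T hT * sgn hmn T hT) * ((-1) ^ (∑ s ∈ S, (s : ℕ)) * (-1) ^ (∑ t ∈ T, (t : ℕ))) := by
        ac_rfl
    _ = (-1) ^ (∑ s ∈ S, (s : ℕ)) * (-1) ^ (∑ t ∈ T, (t : ℕ)) := by rw [hT2, one_mul]

section laplace

noncomputable def Φ (S : Finset (Fin n)) (hS : S.card = m) :
    (Σ _T : {T : Finset (Fin n) // T.card = m},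
      Equiv.Perm (Fin m) × Equiv.Perm (Fin (n - m))) → Equiv.Perm (Fin n) :=
  fun x => (ES x.1.1 x.1.2).symm.trans ((Equiv.sumCongr x.2.1 x.2.2).trans (ES S hS))

lemma Φ_inl (S : Finset (Fin n)) (hS : S.card = m) (T : {T : Finset (Fin n) // T.card = m})
    (φ : Equiv.Perm (Fin m)) (ψ : Equiv.Perm (Fin (n - m))) (k : Fin m) :
    Φ S hS ⟨T, (φ, ψ)⟩ (T.1.orderEmbOfFin T.2 k) = S.orderEmbOfFin hS (φ k) := by
  have h : T.1.orderEmbOfFin T.2 k = ES T.1 T.2 (Sum.inl k) := rfl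
  rw [h]
  show ES S hS (Equiv.sumCongr φ ψ ((ES T.1 T.2).symm (ES T.1 T.2 (Sum.inl k))))
    = S.orderEmbOfFin hS (φ k)
  rw [Equiv.symm_apply_apply]
  rfl

lemma Φ_inr (S : Finset (Fin n)) (hS : S.card = m) (T : {T : Finset (Fin n) // T.card = m})
    (φ : Equiv.Perm (Fin m)) (ψ : Equiv.Perm (Fin (n - m))) (k : Fin (n - m)) :
    Φ S hS ⟨T, (φ, ψ)⟩ (T.1ᶜ.orderEmbOfFin (card_compl_eq _ T.2) k)
      = Sᶜ.orderEmbOfFin (card_compl_eq _ hS) (ψ k) := by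
  have h : T.1ᶜ.orderEmbOfFin (card_compl_eq _ T.2) k = ES T.1 T.2 (Sum.inr k) := rfl
  rw [h]
  show ES S hS (Equiv.sumCongr φ ψ ((ES T.1 T.2).symm (ES T.1 T.2 (Sum.inr k))))
    = Sᶜ.orderEmbOfFin (card_compl_eq _ hS) (ψ k)
  rw [Equiv.symm_apply_apply]
  rfl

lemma Φ_mem (S : Finset (Fin n)) (hS : S.card = m) (T : {T : Finset (Fin n) // T.card = m})
    (φ : Equiv.Perm (Fin m)) (ψ : Equiv.Perm (Fin (n - m))) (j : Fin n) :
    Φ S hS ⟨T, (φ, ψ)⟩ j ∈ S ↔ j ∈ T.1 := by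
  obtain ⟨x, rfl⟩ := (ES T.1 T.2).surjective j
  cases x with
  | inl k =>
    rw [show ES T.1 T.2 (Sum.inl k) = T.1.orderEmbOfFin T.2 k from rfl, Φ_inl]
    simp [Finset.orderEmbOfFin_mem]
  | inr k =>
    rw [show ES T.1 T.2 (Sum.inr k) = T.1ᶜ.orderEmbOfFin (card_compl_eq _ T.2) k from rfl, Φ_inr]
    constructor
    · intro h
      exact absurd h (Finset.mem_compl.1 (Sᶜ.orderEmbOfFin_mem _ (ψ k)))
    · intro h
      exact absurd h (Finset.mem_compl.1 (T.1ᶜ.orderEmbOfFin_mem _ k))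

lemma Φ_bij (S : Finset (Fin n)) (hS : S.card = m) : Function.Bijective (Φ S hS) := by
  constructor
  · rintro ⟨T, φ, ψ⟩ ⟨T', φ', ψ'⟩ h
    obtain rfl : T = T' := by
      apply Subtype.ext
      ext j
      rw [← Φ_mem S hS T φ ψ j, h, Φ_mem]
    obtain rfl : φ = φ' := by
      apply Equiv.ext
      intro k
      have h1 := DFunLike.congr_fun h (T.1.orderEmbOfFin T.2 k)
      rw [Φ_inl, Φ_inl] at h1
      exact (S.orderEmbOfFin hS).injective h1
    obtain rfl : ψ = ψ' := by
      apply Equiv.ext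
      intro k
      have h1 := DFunLike.congr_fun h (T.1ᶜ.orderEmbOfFin (card_compl_eq _ T.2) k)
      rw [Φ_inr, Φ_inr] at h1
      exact (Sᶜ.orderEmbOfFin (card_compl_eq _ hS)).injective h1
    rfl
  · intro σ
    have hT : (Finset.filter (fun j => σ j ∈ S) univ).card = m := by
      have himg : Finset.filter (fun j => σ j ∈ S) univ = S.image σ.symm := by
        ext j
        simp only [Finset.mem_filter, Finset.mem_univ, true_and, Finset.mem_image]
        constructor
        · intro h
          exact ⟨σ j, h, σ.symm_apply_apply j⟩
        · rintro ⟨s, hs, rfl⟩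
          rwa [σ.apply_symm_apply]
      rw [himg, Finset.card_image_of_injective _ σ.symm.injective, hS]
    set T : Finset (Fin n) := Finset.filter (fun j => σ j ∈ S) univ with hTdef
    have hmemφ : ∀ k : Fin m, σ (T.orderEmbOfFin hT k) ∈ S := by
      intro k
      exact (Finset.mem_filter.1 (T.orderEmbOfFin_mem hT k)).2
    have hmemψ : ∀ k : Fin (n - m), σ (Tᶜ.orderEmbOfFin (card_compl_eq _ hT) k) ∈ Sᶜ := by
      intro k
      have h1 := Tᶜ.orderEmbOfFin_mem (card_compl_eq _ hT) k
      rw [Finset.mem_compl] at h1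
      rw [Finset.mem_compl]
      intro hc
      exact h1 (Finset.mem_filter.2 ⟨Finset.mem_univ _, hc⟩)
    set fφ : Fin m → Fin m :=
      fun k => (S.orderIsoOfFin hS).symm ⟨σ (T.orderEmbOfFin hT k), hmemφ k⟩ with hfφ
    set fψ : Fin (n - m) → Fin (n - m) :=
      fun k => (Sᶜ.orderIsoOfFin (card_compl_eq _ hS)).symm
        ⟨σ (Tᶜ.orderEmbOfFin (card_compl_eq _ hT) k), hmemψ k⟩ with hfψ
    have hφinj : Function.Injective fφ := by
      intro a b hab
      rw [hfφ] at hab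
      have := (S.orderIsoOfFin hS).symm.injective hab
      rw [Subtype.mk_eq_mk] at this
      exact (T.orderEmbOfFin hT).injective (σ.injective this)
    have hψinj : Function.Injective fψ := by
      intro a b hab
      rw [hfψ] at hab
      have := (Sᶜ.orderIsoOfFin (card_compl_eq _ hS)).symm.injective hab
      rw [Subtype.mk_eq_mk] at this
      exact (Tᶜ.orderEmbOfFin (card_compl_eq _ hT)).injective (σ.injective this)
    refine ⟨⟨⟨T, hT⟩, (Equiv.ofBijective fφ (Finite.injective_iff_bijective.1 hφinj),
      Equiv.ofBijective fψ (Finite.injective_iff_bijective.1 hψinj))⟩, ?_⟩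
    apply Equiv.ext
    intro j
    obtain ⟨x, rfl⟩ := (ES T hT).surjective j
    cases x with
    | inl k =>
      rw [show ES T hT (Sum.inl k) = T.orderEmbOfFin hT k from rfl]
      rw [show Φ S hS ⟨⟨T, hT⟩, (Equiv.ofBijective fφ (Finite.injective_iff_bijective.1 hφinj),
        Equiv.ofBijective fψ (Finite.injective_iff_bijective.1 hψinj))⟩ (T.orderEmbOfFin hT k)
        = S.orderEmbOfFin hS (fφ k) from Φ_inl S hS ⟨T, hT⟩ _ _ k]
      rw [hfφ]
      have : S.orderEmbOfFin hS ((S.orderIsoOfFin hS).symm ⟨σ (T.orderEmbOfFin hT k), hmemφ k⟩)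
          = ((S.orderIsoOfFin hS) ((S.orderIsoOfFin hS).symm
            ⟨σ (T.orderEmbOfFin hT k), hmemφ k⟩) : Fin n) :=
        (Finset.coe_orderIsoOfFin_apply _ _ _).symm
      rw [this, (S.orderIsoOfFin hS).apply_symm_apply]
    | inr k =>
      rw [show ES T hT (Sum.inr k) = Tᶜ.orderEmbOfFin (card_compl_eq _ hT) k from rfl]
      rw [show Φ S hS ⟨⟨T, hT⟩, (Equiv.ofBijective fφ (Finite.injective_iff_bijective.1 hφinj),
        Equiv.ofBijective fψ (Finite.injective_iff_bijective.1 hψinj))⟩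
          (Tᶜ.orderEmbOfFin (card_compl_eq _ hT) k)
        = Sᶜ.orderEmbOfFin (card_compl_eq _ hS) (fψ k) from Φ_inr S hS ⟨T, hT⟩ _ _ k]
      rw [hfψ]
      have : Sᶜ.orderEmbOfFin (card_compl_eq _ hS) ((Sᶜ.orderIsoOfFin (card_compl_eq _ hS)).symm
            ⟨σ (Tᶜ.orderEmbOfFin (card_compl_eq _ hT) k), hmemψ k⟩)
          = ((Sᶜ.orderIsoOfFin (card_compl_eq _ hS)) ((Sᶜ.orderIsoOfFin (card_compl_eq _ hS)).symm
            ⟨σ (Tᶜ.orderEmbOfFin (card_compl_eq _ hT) k), hmemψ k⟩) : Fin n) :=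
        (Finset.coe_orderIsoOfFin_apply _ _ _).symm
      rw [this, (Sᶜ.orderIsoOfFin (card_compl_eq _ hS)).apply_symm_apply]

lemma sign_Φ (hmn : m + (n - m) = n) (S : Finset (Fin n)) (hS : S.card = m)
    (T : {T : Finset (Fin n) // T.card = m})
    (φ : Equiv.Perm (Fin m)) (ψ : Equiv.Perm (Fin (n - m))) :
    Equiv.Perm.sign (Φ S hS ⟨T, (φ, ψ)⟩)
      = sgn hmn S hS * sgn hmn T.1 T.2 * Equiv.Perm.sign φ * Equiv.Perm.sign ψ := by
  have hdecomp : Φ S hS ⟨T, (φ, ψ)⟩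
      = ρ hmn S hS * ((eqv hmn).permCongr (Equiv.sumCongr φ ψ)) * (ρ hmn T.1 T.2)⁻¹ := by
    apply Equiv.ext
    intro j
    simp only [Φ, ρ, Equiv.Perm.mul_apply, Equiv.trans_apply, Equiv.permCongr_apply,
      Equiv.Perm.inv_def, Equiv.symm_trans_apply, Equiv.symm_symm, Equiv.symm_apply_apply]
  rw [hdecomp, map_mul, map_mul, Equiv.Perm.sign_inv, Equiv.Perm.sign_permCongr,
    Equiv.Perm.sign_sumCongr, sgn, sgn]
  ac_rfl

end laplace

theorem laplace {F : Type*} [CommRing F] (hmn : m + (n - m) = n)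
    (M : Matrix (Fin n) (Fin n) F) (S : Finset (Fin n)) (hS : S.card = m) :
    M.det = ∑ T : {T : Finset (Fin n) // T.card = m},
      (((sgn hmn S hS * sgn hmn T.1 T.2 : ℤˣ) : ℤ) : F) *
      (Matrix.of fun i j : Fin (n - m) =>
        M (Sᶜ.orderEmbOfFin (card_compl_eq _ hS) i)
          (T.1ᶜ.orderEmbOfFin (card_compl_eq _ T.2) j)).det *
      (Matrix.of fun i j : Fin m =>
        M (S.orderEmbOfFin hS i) (T.1.orderEmbOfFin T.2 j)).det := by
  rw [Matrix.det_apply']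
  rw [← Fintype.sum_bijective (Φ S hS) (Φ_bij S hS)
    (fun x => (((Equiv.Perm.sign (Φ S hS x) : ℤˣ) : ℤ) : F) * ∏ i, M (Φ S hS x i) i)
    (fun σ => (((Equiv.Perm.sign σ : ℤˣ) : ℤ) : F) * ∏ i, M (σ i) i)
    (fun x => rfl)]
  rw [← Finset.univ_sigma_univ, Finset.sum_sigma]
  apply Finset.sum_congr rfl
  intro T _
  rw [Fintype.sum_prod_type]
  rw [Matrix.det_apply', Matrix.det_apply', Finset.mul_sum]
  apply Finset.sum_congr rfl
  intro φ _
  rw [Finset.mul_sum, Finset.sum_mul]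
  apply Finset.sum_congr rfl
  intro ψ _
  have hprod : (∏ i, M (Φ S hS ⟨T, (φ, ψ)⟩ i) i)
      = (∏ k : Fin m, M (S.orderEmbOfFin hS (φ k)) (T.1.orderEmbOfFin T.2 k))
        * ∏ k : Fin (n - m), M (Sᶜ.orderEmbOfFin (card_compl_eq _ hS) (ψ k))
            (T.1ᶜ.orderEmbOfFin (card_compl_eq _ T.2) k) := by
    rw [← Equiv.prod_comp (ES T.1 T.2) (fun i => M (Φ S hS ⟨T, (φ, ψ)⟩ i) i),
      Fintype.prod_sum_type]
    congr 1
    · apply Finset.prod_congr rfl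
      intro k _
      rw [show ES T.1 T.2 (Sum.inl k) = T.1.orderEmbOfFin T.2 k from rfl, Φ_inl]
    · apply Finset.prod_congr rfl
      intro k _
      rw [show ES T.1 T.2 (Sum.inr k) = T.1ᶜ.orderEmbOfFin (card_compl_eq _ T.2) k from rfl, Φ_inr]
  rw [hprod, sign_Φ hmn]
  simp only [Matrix.of_apply]
  push_cast
  ring

lemma coeff_eq {F : Type*} [CommRing F] (hmn : m + (n - m) = n) (S T : Finset (Fin n))
    (hS : S.card = m) (hT : T.card = m) :
    (-1 : F) ^ ((∑ s ∈ S, ((s : ℕ) + 1)) + ∑ t ∈ T, ((t : ℕ) + 1))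
      = (((sgn hmn S hS * sgn hmn T hT : ℤˣ) : ℤ) : F) := by
  rw [sgn_mul_sgn hmn S T hS hT]
  have h1 : ∑ s ∈ S, ((s : ℕ) + 1) = (∑ s ∈ S, (s : ℕ)) + m := by
    rw [Finset.sum_add_distrib, Finset.sum_const, hS, smul_eq_mul, mul_one]
  have h2 : ∑ t ∈ T, ((t : ℕ) + 1) = (∑ t ∈ T, (t : ℕ)) + m := by
    rw [Finset.sum_add_distrib, Finset.sum_const, hT, smul_eq_mul, mul_one]
  rw [h1, h2, show (∑ s ∈ S, (s : ℕ)) + m + ((∑ t ∈ T, (t : ℕ)) + m)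
    = ((∑ s ∈ S, (s : ℕ)) + ∑ t ∈ T, (t : ℕ)) + 2 * m from by ring]
  simp only [Units.val_pow_eq_pow_val, Units.val_neg, Units.val_one, Int.cast_pow,
    Int.cast_neg, Int.cast_one]
  rw [pow_add, pow_mul]
  norm_num

def rmap (S U : Finset (Fin n)) (hS : S.card = m) (hU : U.card = m) : Fin n → Fin n :=
  fun i => if h : i ∈ S then U.orderEmbOfFin hU ((S.orderIsoOfFin hS).symm ⟨i, h⟩) else i

lemma rmap_not_mem {S U : Finset (Fin n)} (hS : S.card = m) (hU : U.card = m) {x : Fin n}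
    (hx : x ∉ S) : rmap S U hS hU x = x := dif_neg hx

lemma rmap_emb {S U : Finset (Fin n)} (hS : S.card = m) (hU : U.card = m) (k : Fin m) :
    rmap S U hS hU (S.orderEmbOfFin hS k) = U.orderEmbOfFin hU k := by
  rw [rmap, dif_pos (S.orderEmbOfFin_mem hS k)]
  congr 1
  rw [OrderIso.symm_apply_eq]
  exact Subtype.ext (Finset.coe_orderIsoOfFin_apply S hS k).symm

end CMAux

open CMAux in
theorem complementary_minor_orthogonality_matrix {F : Type*} [Field F] {n m : ℕ}
    (G : Matrix (Fin n) (Fin n) F) (hG : IsUnit G.det)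
    (S U : Finset (Fin n)) (hS : S.card = m) (hU : U.card = m) :
    (∑ T : {T : Finset (Fin n) // T.card = m},
      (-1 : F) ^ ((∑ s ∈ S, ((s : ℕ) + 1)) + ∑ t ∈ T.1, ((t : ℕ) + 1)) *
        Matrix.det (Matrix.of fun i j : Fin (n - m) =>
          G ((Sᶜ).orderEmbOfFin (by rw [Finset.card_compl, hS, Fintype.card_fin]) i)
            ((T.1ᶜ).orderEmbOfFin (by rw [Finset.card_compl, T.2, Fintype.card_fin]) j)) *
        Matrix.det (Matrix.of fun i j : Fin m =>
          G (U.orderEmbOfFin hU i) (T.1.orderEmbOfFin T.2 j))) =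
      (if S = U then 1 else 0) * G.det := by
  have hmn : m + (n - m) = n := add_sub_eq S hS
  set M : Matrix (Fin n) (Fin n) F := Matrix.of fun i j => G (rmap S U hS hU i) j with hM
  trans M.det
  · rw [laplace hmn M S hS]
    apply Finset.sum_congr rfl
    intro T _
    congr 1
    · congr 1
      · exact coeff_eq hmn S T.1 hS T.2
      · congr 1
        ext i j
        simp only [Matrix.of_apply, hM]
        rw [rmap_not_mem hS hU
          (Finset.mem_compl.1 (Sᶜ.orderEmbOfFin_mem (card_compl_eq S hS) i))]
    · congr 1
      ext i j
      simp only [Matrix.of_apply, hM]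
      rw [rmap_emb hS hU]
  · rcases eq_or_ne S U with h | h
    · subst h
      rw [if_pos rfl, one_mul]
      congr 1
      ext i j
      simp only [hM, Matrix.of_apply]
      by_cases hx : i ∈ S
      · rw [show rmap S S hS hU i = i from ?_]
        rw [rmap, dif_pos hx]
        have hemb : S.orderEmbOfFin hU = S.orderEmbOfFin hS := rfl
        rw [hemb]
        have := Finset.coe_orderIsoOfFin_apply S hS ((S.orderIsoOfFin hS).symm ⟨i, hx⟩)
        rw [← this, (S.orderIsoOfFin hS).apply_symm_apply]
      · rw [rmap_not_mem hS hU hx]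
    · rw [if_neg h, zero_mul]
      have hnsub : ¬ U ⊆ S := fun hsub =>
        h ((Finset.eq_of_subset_of_card_le hsub (by rw [hS, hU])).symm)
      obtain ⟨u, huU, huS⟩ := Finset.not_subset.1 hnsub
      set k : Fin m := (U.orderIsoOfFin hU).symm ⟨u, huU⟩ with hk
      have hik : S.orderEmbOfFin hS k ≠ u := fun hc => huS (hc ▸ S.orderEmbOfFin_mem hS k)
      apply Matrix.det_zero_of_row_eq hik
      funext j
      simp only [hM, Matrix.of_apply]
      rw [rmap_not_mem hS hU huS, rmap_emb hS hU]
      congr 2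
      rw [hk]
      have := Finset.coe_orderIsoOfFin_apply U hU ((U.orderIsoOfFin hU).symm ⟨u, huU⟩)
      rw [(U.orderIsoOfFin hU).apply_symm_apply] at this
      exact this.symm
end

section
/- Let μ be a linear functional on one-variable polynomials with monic orthogonal polynomials (p_k) satisfying ⟨p_k,p_k⟩ = μ(p_k²) ≠ 0. For f_1,...,f_m, g_1,...,g_m polynomials, one has (1/m!) μ^{⊗m}( det_{1≤i,j≤m}(f_j(x_i)) · det_{1≤i,j≤m}(g_j(x_i)) ) = det_{1≤i,j≤m}( μ(f_i g_j) ). -/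
/-!
Expand both determinants over permutations σ, τ. The term indexed by (σ, τ) is a product of
one-variable factors f_{σ i}(x_i) g_{τ i}(x_i), on which μ^{⊗m} acts as ∏_i μ(f_{σ i} g_{τ i}).
For fixed σ the sum over τ is the determinant of (μ(f_i g_j)) with its rows permuted by σ, that is
sign σ times that determinant; so each of the m! permutations σ contributes the same determinant.
-/

open Finset

/-- `μ^{⊗m}`: the linear functional `μ` applied in each of the `m` variables of a
polynomial in `m` variables. -/
noncomputable def tensorPow (μ : Polynomial ℝ →ₗ[ℝ] ℝ) (m : ℕ)
    (f : MvPolynomial (Fin m) ℝ) : ℝ :=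
  ∑ d ∈ f.support, f.coeff d * ∏ i : Fin m, μ (Polynomial.X ^ d i)

open Equiv

namespace Matrix

variable {n R : Type*} [Fintype n] [DecidableEq n] [CommRing R]

theorem det_eq_sum_sign_mul_prod_apply_perm (M : Matrix n n R) :
    M.det = ∑ σ : Perm n, (Perm.sign σ : ℤ) * ∏ i, M i (σ i) := by
  rw [← det_transpose, det_apply']
  rfl

theorem sum_sign_mul_sign_mul_prod_eq_factorial_mul_det (M : Matrix n n R) :
    ∑ σ : Perm n, ∑ τ : Perm n,
        ((Perm.sign σ : ℤ) * (Perm.sign τ : ℤ) : R) * ∏ i, M (σ i) (τ i) =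
      (Fintype.card n).factorial * M.det := by
  have hrow (σ : Perm n) :
      ∑ τ : Perm n, (Perm.sign τ : R) * ∏ i, M (σ i) (τ i) = Perm.sign σ * M.det := by
    rw [← det_permute, det_eq_sum_sign_mul_prod_apply_perm]
    rfl
  simp_rw [mul_assoc, ← mul_sum, hrow, ← mul_assoc, ← Int.cast_mul, ← Units.val_mul,
    Int.units_mul_self, Units.val_one, Int.cast_one, one_mul, sum_const, card_univ,
    Fintype.card_perm, nsmul_eq_mul]

end Matrix

section TensorPow

variable (μ : Polynomial ℝ →ₗ[ℝ] ℝ) (m : ℕ)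

noncomputable def tensorPowLinear : MvPolynomial (Fin m) ℝ →ₗ[ℝ] ℝ :=
  Finsupp.linearCombination ℝ (fun d : Fin m →₀ ℕ => ∏ i, μ (Polynomial.X ^ d i)) ∘ₗ
    (AddMonoidAlgebra.coeffLinearEquiv ℝ).toLinearMap

theorem coe_tensorPowLinear : ⇑(tensorPowLinear μ m) = tensorPow μ m :=
  rfl

theorem tensorPow_monomial (d : Fin m →₀ ℕ) (c : ℝ) :
    tensorPow μ m (MvPolynomial.monomial d c) = c * ∏ i, μ (Polynomial.X ^ d i) :=
  Finsupp.linearCombination_single ℝ _ _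

theorem tensorPow_prod_X_pow (d : Fin m → ℕ) :
    tensorPow μ m (∏ i, MvPolynomial.X i ^ d i) = ∏ i, μ (Polynomial.X ^ d i) := by
  rw [MvPolynomial.prod_X_pow, tensorPow_monomial, one_mul]
  simp only [Finsupp.indicator_apply, mem_univ, dite_true]

theorem tensorPow_prod_aeval_X (q : Fin m → Polynomial ℝ) :
    tensorPow μ m (∏ i, Polynomial.aeval (MvPolynomial.X i) (q i)) = ∏ i, μ (q i) := by
  have hX (i : Fin m) : Polynomial.aeval (MvPolynomial.X i : MvPolynomial (Fin m) ℝ) (q i) =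
      ∑ k ∈ range ((q i).natDegree + 1), (q i).coeff k • MvPolynomial.X i ^ k :=
    Polynomial.aeval_eq_sum_range _
  have hμ (i : Fin m) : μ (q i) =
      ∑ k ∈ range ((q i).natDegree + 1), (q i).coeff k • μ (Polynomial.X ^ k) := by
    conv_lhs => rw [← Polynomial.aeval_X_left_apply (q i), Polynomial.aeval_eq_sum_range]
    simp only [map_sum, map_smul]
  simp_rw [hX, hμ, prod_univ_sum, prod_smul, ← coe_tensorPowLinear, map_sum, map_smul,
    coe_tensorPowLinear, tensorPow_prod_X_pow]

theorem tensorPow_det_mul_det (f g : Fin m → Polynomial ℝ) :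
    tensorPow μ m
        (Matrix.det (Matrix.of fun i j : Fin m =>
          Polynomial.aeval (MvPolynomial.X i : MvPolynomial (Fin m) ℝ) (f j)) *
         Matrix.det (Matrix.of fun i j : Fin m =>
          Polynomial.aeval (MvPolynomial.X i : MvPolynomial (Fin m) ℝ) (g j))) =
      ∑ σ : Perm (Fin m), ∑ τ : Perm (Fin m),
        ((Perm.sign σ : ℤ) * (Perm.sign τ : ℤ) : ℝ) * ∏ i, μ (f (σ i) * g (τ i)) := by
  simp_rw [Matrix.det_eq_sum_sign_mul_prod_apply_perm, sum_mul_sum, Matrix.of_apply,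
    ← coe_tensorPowLinear, map_sum]
  refine sum_congr rfl fun σ _ => sum_congr rfl fun τ _ => ?_
  rw [mul_mul_mul_comm, ← Int.cast_mul, ← zsmul_eq_mul, map_zsmul, ← prod_mul_distrib]
  simp_rw [← map_mul, coe_tensorPowLinear, tensorPow_prod_aeval_X, zsmul_eq_mul, Int.cast_mul]

end TensorPow

theorem andreief_identity_general (μ : Polynomial ℝ →ₗ[ℝ] ℝ)
    (m : ℕ) (f g : Fin m → Polynomial ℝ) :
    (1 / (m.factorial : ℝ)) * tensorPow μ m
        (Matrix.det (Matrix.of fun i j : Fin m =>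
          Polynomial.aeval (MvPolynomial.X i : MvPolynomial (Fin m) ℝ) (f j)) *
         Matrix.det (Matrix.of fun i j : Fin m =>
          Polynomial.aeval (MvPolynomial.X i : MvPolynomial (Fin m) ℝ) (g j))) =
      Matrix.det (Matrix.of fun i j : Fin m => μ (f i * g j)) := by
  rw [tensorPow_det_mul_det]
  have hsum := Matrix.sum_sign_mul_sign_mul_prod_eq_factorial_mul_det
    (Matrix.of fun i j : Fin m => μ (f i * g j))
  simp only [Matrix.of_apply, Fintype.card_fin] at hsum
  rw [hsum, one_div, inv_mul_cancel_left₀ (by positivity)]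

theorem andreief_identity (μ : Polynomial ℝ →ₗ[ℝ] ℝ)
    (p : ℕ → Polynomial ℝ)
    (hdeg : ∀ k, (p k).natDegree = k) (hmonic : ∀ k, (p k).Monic)
    (horth : ∀ j k, j ≠ k → μ (p j * p k) = 0)
    (hnz : ∀ k, μ (p k * p k) ≠ 0)
    (m : ℕ) (f g : Fin m → Polynomial ℝ) :
    (1 / (m.factorial : ℝ)) * tensorPow μ m
        (Matrix.det (Matrix.of fun i j : Fin m =>
          Polynomial.aeval (MvPolynomial.X i : MvPolynomial (Fin m) ℝ) (f j)) *
         Matrix.det (Matrix.of fun i j : Fin m =>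
          Polynomial.aeval (MvPolynomial.X i : MvPolynomial (Fin m) ℝ) (g j))) =
      Matrix.det (Matrix.of fun i j : Fin m => μ (f i * g j)) :=
  andreief_identity_general μ m f g
end

section
/- Let μ be a linear functional on one-variable polynomials with monic orthogonal polynomials p_0,...,p_{n−1} satisfying h_k := μ(p_k²) ≠ 0. Define φ from antisymmetric polynomials in m variables of degree < n in each to antisymmetric polynomials in n−m variables by (φf)(x) = (1/m!) μ^{⊗m}_y( f(y) Δ(y,x) ), where Δ(y,x) is the Vandermonde product of the concatenated tuple. Then for S ⊆ [n] with |S| = m, φ(p_S) = (-1)^{m(m+1)/2 + Σ_{s∈S} s} · (Π_{i∈S} h_{i−1}) · p_{S^c}, where p_S(x) = det_{1≤i≤m, j∈S}(p_{j−1}(x_i)) and S^c = [n] \ S. -/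
open Finset

/-- `μ^{⊗m}_y`: the linear functional `μ` applied in each of the first `m` variables
(the `y`-variables) of a polynomial in `m + r` variables, leaving a polynomial in the
remaining `r` variables (the `x`-variables). -/
noncomputable def tensorPowPartial (μ : Polynomial ℝ →ₗ[ℝ] ℝ) (m r : ℕ)
    (f : MvPolynomial (Fin m ⊕ Fin r) ℝ) : MvPolynomial (Fin r) ℝ :=
  ∑ d ∈ f.support,
    (f.coeff d * ∏ i : Fin m, μ (Polynomial.X ^ d (Sum.inl i))) •
      ∏ j : Fin r, (MvPolynomial.X j : MvPolynomial (Fin r) ℝ) ^ d (Sum.inr j)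

/-!
Expand both determinants. On a product `∏_x q_x(z_x)` of one-variable polynomials, `μ^{⊗m}_y`
factorizes as `∏_i μ(q_{y_i}) · ∏_j q_{x_j}(x_j)`, so by orthogonality the term indexed by
`σ ∈ S_m` and `τ ∈ S_{m+r}` survives only when `τ` restricts to `σ` on the `y`-variables, and
each of the `m!` permutations `σ` contributes `∏_{s ∈ S} h_s · p_{Sᶜ}(x)`. This needs the
columns of `Δ(y, x) = det (p_k(z_i))_{i, k}` (the `p_k` are monic of degree `k`) in the order
`S, Sᶜ`; the reordering costs the sign of the shuffle. Indexing from `0`, its inversions are the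
pairs `t < s` with `s ∈ S`, `t ∉ S`, and there are `∑_{s ∈ S} s - m(m-1)/2` of them.
-/

open MvPolynomial (X C basisMonomials coe_basisMonomials monomial_sum_one X_pow_eq_monomial
  smul_eq_C_mul)
open Polynomial (aeval)
open Equiv

section TensorPowPartial

variable (μ : Polynomial ℝ →ₗ[ℝ] ℝ) (m r : ℕ)

noncomputable def tensorPowPartialₗ :
    MvPolynomial (Fin m ⊕ Fin r) ℝ →ₗ[ℝ] MvPolynomial (Fin r) ℝ :=
  (basisMonomials _ ℝ).constr ℝ fun d =>
    (∏ i, μ (Polynomial.X ^ d (Sum.inl i))) •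
      ∏ j, (X j : MvPolynomial (Fin r) ℝ) ^ d (Sum.inr j)

theorem tensorPowPartialₗ_apply (f : MvPolynomial (Fin m ⊕ Fin r) ℝ) :
    tensorPowPartialₗ μ m r f = tensorPowPartial μ m r f := by
  rw [tensorPowPartialₗ, Module.Basis.constr_apply]
  simp only [tensorPowPartial, Finsupp.sum, mul_smul]
  rfl

theorem tensorPowPartialₗ_prod_X_pow (κ : Fin m ⊕ Fin r → ℕ) :
    tensorPowPartialₗ μ m r (∏ x, X x ^ κ x) =
      (∏ i, μ (Polynomial.X ^ κ (Sum.inl i))) •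
        ∏ j, (X j : MvPolynomial (Fin r) ℝ) ^ κ (Sum.inr j) := by
  have h_monomial : ∏ x, (X x : MvPolynomial (Fin m ⊕ Fin r) ℝ) ^ κ x =
      basisMonomials _ ℝ (∑ x, Finsupp.single x (κ x)) := by
    simp only [coe_basisMonomials, monomial_sum_one, X_pow_eq_monomial]
  have h_exponent : ∀ y, (∑ x, Finsupp.single x (κ x)) y = κ y := by
    intro y
    simp only [Finsupp.finsetSum_apply, Finsupp.single_apply, sum_ite_eq', mem_univ, if_true]
  rw [h_monomial, tensorPowPartialₗ, Module.Basis.constr_basis]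
  simp only [h_exponent]

theorem tensorPowPartialₗ_prod_aeval (h : Fin m ⊕ Fin r → Polynomial ℝ) :
    tensorPowPartialₗ μ m r (∏ x, aeval (X x : MvPolynomial (Fin m ⊕ Fin r) ℝ) (h x)) =
      (∏ i, μ (h (Sum.inl i))) •
        ∏ j, aeval (X j : MvPolynomial (Fin r) ℝ) (h (Sum.inr j)) := by
  -- what a degree-`k` term in the variable `x` becomes under `μ^{⊗m}_y`
  let t : Fin m ⊕ Fin r → ℕ → MvPolynomial (Fin r) ℝ :=
    Sum.elim (fun _ k => C (μ (Polynomial.X ^ k))) fun j k => X j ^ k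
  let N x := range ((h x).natDegree + 1)
  have h_expand : ∏ x, aeval (X x : MvPolynomial (Fin m ⊕ Fin r) ℝ) (h x) =
      ∑ κ ∈ Fintype.piFinset N, (∏ x, (h x).coeff (κ x)) • ∏ x, X x ^ κ x := by
    simp_rw [Polynomial.aeval_eq_sum_range, prod_univ_sum, prod_smul]
    rfl
  have h_factor : (∏ i, μ (h (Sum.inl i))) •
      ∏ j, aeval (X j : MvPolynomial (Fin r) ℝ) (h (Sum.inr j)) =
      ∏ x, ∑ k ∈ N x, (h x).coeff k • t x k := by
    rw [Fintype.prod_sum_type, smul_eq_C_mul, map_prod]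
    congr 1 <;> refine prod_congr rfl fun x _ => ?_
    · conv_lhs => rw [← Polynomial.aeval_X_left_apply (h (Sum.inl x)),
        Polynomial.aeval_eq_sum_range]
      simp only [map_sum, map_smul, smul_eq_mul, map_mul, smul_eq_C_mul, t, N, Sum.elim_inl]
    · exact Polynomial.aeval_eq_sum_range _
  rw [h_expand, h_factor, prod_univ_sum, map_sum]
  refine sum_congr rfl fun κ _ => ?_
  rw [map_smul, tensorPowPartialₗ_prod_X_pow, prod_smul,
    Fintype.prod_sum_type (fun x => t x (κ x)), smul_eq_C_mul _ (∏ i, μ _), map_prod]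
  rfl

end TensorPowPartial

section Orthogonality

theorem Matrix.det_eq_sum_sign_smul_prod_apply (K : Type*) {n A : Type*} [Fintype n]
    [DecidableEq n] [CommRing K] [CommRing A] [Algebra K A] (M : Matrix n n A) :
    M.det = ∑ σ : Perm n, ((Perm.sign σ : ℤ) : K) • ∏ i, M i (σ i) := by
  rw [← Matrix.det_transpose, Matrix.det_apply]
  refine sum_congr rfl fun σ _ => ?_
  rw [Units.smul_def, Int.cast_smul_eq_zsmul]
  rfl

theorem Equiv.Perm.exists_eq_sumCongr {α β : Type*} [Finite α] [Finite β]
    (τ : Perm (α ⊕ β)) (σ : Perm α) (h : ∀ a, τ (Sum.inl a) = Sum.inl (σ a)) :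
    ∃ π : Perm β, τ = σ.sumCongr π := by
  obtain ⟨⟨σ', π⟩, hτ⟩ := Perm.mem_sumCongrHom_range_of_perm_mapsTo_inl
    (σ := τ) (by rintro _ ⟨a, rfl⟩; exact ⟨σ a, (h a).symm⟩)
  have hσ : σ' = σ := by
    ext a
    simpa [← hτ] using h a
  exact ⟨π, by rw [← hτ, hσ]; rfl⟩

variable (μ : Polynomial ℝ →ₗ[ℝ] ℝ) (m r : ℕ) (q : Fin m ⊕ Fin r → Polynomial ℝ)

theorem tensorPowPartialₗ_prod_mul_det (horth : Pairwise fun a b => μ (q a * q b) = 0)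
    (σ : Perm (Fin m)) :
    tensorPowPartialₗ μ m r
      ((∏ i, aeval (X (Sum.inl i)) (q (Sum.inl (σ i)))) *
        (Matrix.of fun x y => aeval (X x : MvPolynomial (Fin m ⊕ Fin r) ℝ) (q y)).det) =
      (((Perm.sign σ : ℤ) : ℝ) * ∏ k, μ (q (Sum.inl k) * q (Sum.inl k))) •
        (Matrix.of fun j k => aeval (X j : MvPolynomial (Fin r) ℝ) (q (Sum.inr k))).det := by
  let G (τ : Perm (Fin m ⊕ Fin r)) : MvPolynomial (Fin r) ℝ :=
    ((Perm.sign τ : ℤ) : ℝ) • ((∏ i, μ (q (Sum.inl (σ i)) * q (τ (Sum.inl i)))) •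
      ∏ j, aeval (X j : MvPolynomial (Fin r) ℝ) (q (τ (Sum.inr j))))
  have h_term : ∀ τ : Perm (Fin m ⊕ Fin r), tensorPowPartialₗ μ m r
      ((∏ i, aeval (X (Sum.inl i)) (q (Sum.inl (σ i)))) *
        (((Perm.sign τ : ℤ) : ℝ) • ∏ x, aeval (X x) (q (τ x)))) = G τ := by
    intro τ
    have h_split : (∏ i, aeval (X (Sum.inl i) : MvPolynomial (Fin m ⊕ Fin r) ℝ)
        (q (Sum.inl (σ i)))) * ∏ x, aeval (X x) (q (τ x)) =
        ∏ x, aeval (X x) (Sum.elim (fun i => q (Sum.inl (σ i)) * q (τ (Sum.inl i)))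
          (fun j => q (τ (Sum.inr j))) x) := by
      simp only [Fintype.prod_sum_type, Sum.elim_inl, Sum.elim_inr, map_mul, prod_mul_distrib,
        mul_assoc]
    rw [mul_smul_comm, map_smul, h_split, tensorPowPartialₗ_prod_aeval]
    rfl
  -- only the permutations `τ = σ ⊕ π` survive the orthogonality relations
  have h_vanish : ∀ τ ∉ Set.range (σ.sumCongr : Perm (Fin r) → _), G τ = 0 := by
    intro τ hτ
    obtain ⟨i, hi⟩ : ∃ i, τ (Sum.inl i) ≠ Sum.inl (σ i) := by
      by_contra! h
      obtain ⟨π, rfl⟩ := Perm.exists_eq_sumCongr τ σ h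
      exact hτ ⟨π, rfl⟩
    have h_zero : μ (q (Sum.inl (σ i)) * q (τ (Sum.inl i))) = 0 := horth hi.symm
    simp only [G]
    rw [prod_eq_zero (mem_univ i) h_zero, zero_smul, smul_zero]
  have h_diag : ∏ i, μ (q (Sum.inl (σ i)) * q (Sum.inl (σ i))) =
      ∏ k, μ (q (Sum.inl k) * q (Sum.inl k)) :=
    Equiv.prod_comp σ fun k => μ (q (Sum.inl k) * q (Sum.inl k))
  rw [Matrix.det_eq_sum_sign_smul_prod_apply ℝ, mul_sum, map_sum,
    Matrix.det_eq_sum_sign_smul_prod_apply ℝ, smul_sum]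
  simp only [Matrix.of_apply, h_term]
  refine (Fintype.sum_of_injective (fun π => σ.sumCongr π)
    (Perm.sumCongrHom_injective.comp (Prod.mk_right_injective σ)) _ G h_vanish
    fun π => ?_).symm
  simp only [G, Perm.sign_sumCongr, Units.val_mul, Int.cast_mul, Perm.sumCongr_apply, Sum.map_inl,
    Sum.map_inr, smul_smul, h_diag]
  ring_nf

theorem tensorPowPartialₗ_det_mul_det (horth : Pairwise fun a b => μ (q a * q b) = 0) :
    tensorPowPartialₗ μ m r
      ((Matrix.of fun i k =>
          aeval (X (Sum.inl i) : MvPolynomial (Fin m ⊕ Fin r) ℝ) (q (Sum.inl k))).det *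
        (Matrix.of fun x y => aeval (X x : MvPolynomial (Fin m ⊕ Fin r) ℝ) (q y)).det) =
      ((m.factorial : ℝ) * ∏ k, μ (q (Sum.inl k) * q (Sum.inl k))) •
        (Matrix.of fun j k => aeval (X j : MvPolynomial (Fin r) ℝ) (q (Sum.inr k))).det := by
  have h_sign_sq : ∀ σ : Perm (Fin m),
      ((Perm.sign σ : ℤ) : ℝ) * ((Perm.sign σ : ℤ) : ℝ) = 1 := by
    intro σ
    rw [← Int.cast_mul, ← Units.val_mul, Int.units_mul_self, Units.val_one, Int.cast_one]
  rw [Matrix.det_eq_sum_sign_smul_prod_apply ℝ, sum_mul, map_sum]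
  simp only [smul_mul_assoc, map_smul, Matrix.of_apply,
    tensorPowPartialₗ_prod_mul_det μ m r q horth, smul_smul, ← mul_assoc, h_sign_sq, one_mul,
    sum_const, card_univ, Fintype.card_perm, Fintype.card_fin, ← Nat.cast_smul_eq_nsmul ℝ]

end Orthogonality

section Sign

theorem Finset.sum_card_filter_lt_eq_choose_two {α : Type*} [LinearOrder α] (S : Finset α) :
    ∑ j ∈ S, #{i ∈ S | i < j} = (#S).choose 2 := by
  induction S using Finset.induction_on_max with
  | empty => simp
  | insert a s h_lt ih =>
    have ha : a ∉ s := fun h => lt_irrefl a (h_lt a h)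
    have h_top : {i ∈ insert a s | i < a} = s := by
      ext i
      simp only [mem_filter, mem_insert]
      exact ⟨fun ⟨h, hi⟩ => h.resolve_left (ne_of_lt hi), fun h => ⟨Or.inr h, h_lt i h⟩⟩
    have h_rest : ∀ j ∈ s, {i ∈ insert a s | i < j} = {i ∈ s | i < j} := fun j hj => by
      rw [filter_insert, if_neg (not_lt_of_gt (h_lt j hj))]
    rw [sum_insert ha, h_top, sum_congr rfl fun j hj => by rw [h_rest j hj], ih,
      card_insert_of_notMem ha, Nat.choose_succ_succ', Nat.choose_one_right]

theorem Fin.sum_card_filter_lt_notMem_add_choose_two {n : ℕ} (S : Finset (Fin n)) :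
    ∑ j ∈ S, #{i ∈ Iio j | i ∉ S} + (#S).choose 2 = ∑ j ∈ S, (j : ℕ) := by
  rw [← Finset.sum_card_filter_lt_eq_choose_two, ← sum_add_distrib]
  refine sum_congr rfl fun j _ => ?_
  rw [← Fin.card_Iio j, ← card_filter_add_card_filter_not (s := Iio j) (· ∉ S),
    add_left_cancel_iff]
  congr 1
  ext i
  simp [and_comm]

theorem Equiv.Perm.sign_eq_neg_one_pow_of_lt_iff {n : ℕ} (σ : Perm (Fin n)) (S : Finset (Fin n))
    (hσ : ∀ i j, i < j → (σ j < σ i ↔ i ∉ S ∧ j ∈ S)) :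
    Perm.sign σ = (-1) ^ ∑ j ∈ S, #{i ∈ Iio j | i ∉ S} := by
  have h_pair : ∀ j, ∀ i ∈ Iio j, (if σ i < σ j then 1 else -1 : ℤˣ) =
      if j ∈ S then (if i ∉ S then -1 else 1) else 1 := by
    intro j i hi
    have hij : i < j := mem_Iio.mp hi
    have h_ne : σ i ≠ σ j := σ.injective.ne hij.ne
    by_cases h : σ i < σ j
    · have := (hσ i j hij).not.mp (not_lt_of_gt h)
      split_ifs <;> tauto
    · have := (hσ i j hij).mp (lt_of_le_of_ne (not_lt.mp h) h_ne.symm)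
      split_ifs <;> tauto
  rw [Perm.sign_eq_prod_prod_Iio, ← prod_pow_eq_pow_sum,
    prod_congr rfl fun j _ => prod_congr rfl (h_pair j)]
  simp only [prod_ite_irrel, prod_const_one, prod_ite, prod_const, mul_one]
  congr 1
  ext j
  simp

theorem sign_finSumFinEquiv_trans_finSumEquivOfFinset_symm {n m r : ℕ} (h : m + r = n)
    (S : Finset (Fin n)) (hS : #S = m) (hSc : #Sᶜ = r) :
    ((Perm.sign ((finSumFinEquiv.trans (finCongr h)).trans
        (finSumEquivOfFinset hS hSc).symm) : ℤ) : ℝ) =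
      (-1) ^ (m * (m + 1) / 2 + ∑ s ∈ S, ((s : ℕ) + 1)) := by
  set e := finSumEquivOfFinset hS hSc
  set d := finSumFinEquiv.trans (finCongr h)
  have h_conj : (e.symm.trans (d.trans e.symm)).trans e = e.symm.trans d := by
    ext; simp
  have h_memS : ∀ k, S.orderEmbOfFin hS k ∈ S := S.orderEmbOfFin_mem hS
  have h_memSc : ∀ l, Sᶜ.orderEmbOfFin hSc l ∉ S := fun l =>
    mem_compl.mp (Sᶜ.orderEmbOfFin_mem hSc l)
  have h_inv : ∀ i j, i < j →
      ((e.symm.trans d) j < (e.symm.trans d) i ↔ i ∉ S ∧ j ∈ S) := by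
    intro i j hij
    obtain ⟨a, rfl⟩ := e.surjective i
    obtain ⟨b, rfl⟩ := e.surjective j
    simp only [Equiv.trans_apply, Equiv.symm_apply_apply] at hij ⊢
    rcases a with k | k <;> rcases b with l | l <;>
      simp only [e, finSumEquivOfFinset_inl, finSumEquivOfFinset_inr, OrderEmbedding.lt_iff_lt,
        h_memS, h_memSc, not_true, not_false_eq_true, and_true, and_false, iff_true, iff_false,
        d, Equiv.trans_apply, finSumFinEquiv_apply_left, finSumFinEquiv_apply_right,
        finCongr_apply, Fin.lt_def, Fin.val_cast, Fin.val_castAdd, Fin.val_natAdd] at hij ⊢ <;>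
      omega
  have h_tri : m * (m + 1) / 2 = m.choose 2 + m := by
    have h_pascal : (m + 1).choose 2 = m + m.choose 2 := by
      simpa using Nat.choose_succ_succ' m 1
    have h_formula : (m + 1).choose 2 = (m + 1) * m / 2 := by
      simpa using Nat.choose_two_right (m + 1)
    rw [mul_comm]
    omega
  have h_sum : ∑ s ∈ S, ((s : ℕ) + 1) = ∑ s ∈ S, (s : ℕ) + m := by
    rw [sum_add_distrib, sum_const, smul_eq_mul, mul_one, hS]
  have h_exp : m * (m + 1) / 2 + ∑ s ∈ S, ((s : ℕ) + 1) =
      ∑ j ∈ S, #{i ∈ Iio j | i ∉ S} + 2 * (m.choose 2 + m) := by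
    have := Fin.sum_card_filter_lt_notMem_add_choose_two S
    rw [hS] at this
    omega
  rw [← Perm.sign_symm_trans_trans _ e, h_conj, Perm.sign_eq_neg_one_pow_of_lt_iff _ S h_inv,
    h_exp, pow_add, pow_mul]
  simp

end Sign

section Vandermonde

theorem Finset.prod_filter_lt_eq_prod_prod_Ioi {α M : Type*} [Fintype α] [LinearOrder α]
    [LocallyFiniteOrderTop α] [CommMonoid M] (f : α → α → M) :
    ∏ q ∈ univ.filter (fun q : α × α => q.1 < q.2), f q.1 q.2 =
      ∏ i, ∏ j ∈ Ioi i, f i j := by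
  rw [prod_filter, Fintype.prod_prod_type]
  refine prod_congr rfl fun i _ => ?_
  rw [← prod_filter]
  congr 1
  ext j
  simp

theorem Matrix.det_aeval_eq_prod_Ioi_sub {K R ι : Type*} [CommRing K] [CommRing R]
    [Nontrivial R] [Algebra K R] [Fintype ι] [DecidableEq ι] {N : ℕ} (e : ι ≃ Fin N)
    (v : ι → R) (p : ℕ → Polynomial K) (hdeg : ∀ k, (p k).natDegree = k)
    (hmonic : ∀ k, (p k).Monic) :
    (Matrix.of fun x y => aeval (v x) (p (e y))).det =
      ∏ i, ∏ j ∈ Ioi i, (v (e.symm j) - v (e.symm i)) := by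
  rw [← Matrix.det_vandermonde, Matrix.det_eval_matrixOfPolynomials_eq_det_vandermonde
    (fun j => v (e.symm j)) (fun j => (p j).map (algebraMap K R))
    (fun j => ((hmonic j).natDegree_map _).trans (hdeg j)) (fun j => (hmonic j).map _),
    ← Matrix.det_submatrix_equiv_self e]
  congr 1
  ext x y
  simp [Polynomial.aeval_def, Polynomial.eval_map]

end Vandermonde

theorem hodge_star_on_antisymmetric_basis (μ : Polynomial ℝ →ₗ[ℝ] ℝ)
    (p : ℕ → Polynomial ℝ)
    (hdeg : ∀ k, (p k).natDegree = k) (hmonic : ∀ k, (p k).Monic)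
    (horth : ∀ j k, j ≠ k → μ (p j * p k) = 0)
    (n m : ℕ) (S : Finset (Fin n)) (hS : S.card = m) :
    ((1 : ℝ) / (m.factorial : ℝ)) • tensorPowPartial μ m (n - m)
        ((Matrix.det (Matrix.of fun i k : Fin m =>
            Polynomial.aeval
              (MvPolynomial.X (Sum.inl i) : MvPolynomial (Fin m ⊕ Fin (n - m)) ℝ)
              (p ((S.orderEmbOfFin hS k : Fin n) : ℕ)))) *
          ∏ q ∈ Finset.univ.filter
              (fun q : Fin (m + (n - m)) × Fin (m + (n - m)) => q.1 < q.2),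
            ((MvPolynomial.X (finSumFinEquiv.symm q.2) :
                MvPolynomial (Fin m ⊕ Fin (n - m)) ℝ) -
              MvPolynomial.X (finSumFinEquiv.symm q.1))) =
      ((-1 : ℝ) ^ (m * (m + 1) / 2 + ∑ s ∈ S, ((s : ℕ) + 1)) *
          ∏ i ∈ S, μ (p (i : ℕ) * p (i : ℕ))) •
        Matrix.det (Matrix.of fun i k : Fin (n - m) =>
          Polynomial.aeval
            (MvPolynomial.X i : MvPolynomial (Fin (n - m)) ℝ)
            (p (((Sᶜ).orderEmbOfFin
                (by rw [Finset.card_compl, hS, Fintype.card_fin]) k : Fin n) : ℕ))) := by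
  have hmn : m ≤ n := hS ▸ (card_le_univ S).trans_eq (Fintype.card_fin n)
  have hSc : #Sᶜ = n - m := by rw [card_compl, hS, Fintype.card_fin]
  set e := finSumEquivOfFinset hS hSc
  set d := finSumFinEquiv.trans (finCongr (Nat.add_sub_cancel' hmn))
  have horth' : Pairwise fun a b => μ (p (e a) * p (e b)) = 0 := fun a b hab =>
    horth _ _ (Fin.val_injective.ne (e.injective.ne hab))
  -- `Δ` is the determinant with columns `p 0, …, p (n - 1)`; move the columns `S` to the front
  have h_vandermonde :
      ∏ q ∈ univ.filter (fun q : Fin (m + (n - m)) × Fin (m + (n - m)) => q.1 < q.2),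
        ((X (finSumFinEquiv.symm q.2) : MvPolynomial (Fin m ⊕ Fin (n - m)) ℝ) -
          X (finSumFinEquiv.symm q.1)) =
      ((Perm.sign (d.trans e.symm) : ℤ) : ℝ) •
        (Matrix.of fun x y => aeval (X x : MvPolynomial (Fin m ⊕ Fin (n - m)) ℝ)
          (p (e y))).det := by
    rw [prod_filter_lt_eq_prod_prod_Ioi fun i j => (X (finSumFinEquiv.symm j) :
        MvPolynomial (Fin m ⊕ Fin (n - m)) ℝ) - X (finSumFinEquiv.symm i),
      ← Matrix.det_aeval_eq_prod_Ioi_sub finSumFinEquiv X p hdeg hmonic, Int.cast_smul_eq_zsmul,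
      zsmul_eq_mul, ← Matrix.det_permute']
    congr 1
    ext x y
    simp [d]
  have h_diag :
      ∏ k, μ (p (e (Sum.inl k)) * p (e (Sum.inl k))) = ∏ i ∈ S, μ (p i * p i) := by
    rw [← map_orderEmbOfFin_univ S hS, prod_map]
    rfl
  rw [← tensorPowPartialₗ_apply, h_vandermonde, mul_smul_comm, map_smul]
  -- `e (Sum.inl k)` and `e (Sum.inr k)` unfold to `S.orderEmbOfFin hS k`, `Sᶜ.orderEmbOfFin _ k`
  erw [tensorPowPartialₗ_det_mul_det μ m (n - m) (fun y => p (e y)) horth']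
  rw [smul_smul, smul_smul, h_diag, sign_finSumFinEquiv_trans_finSumEquivOfFinset_symm]
  congr 1
  field_simp
end
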